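/- arXiv:1902.00627 — 8 statements merged into one kernel-verified Lean document; each statement's English description precedes it below -/
import Mathlib

section
/- With i^⋆, p^⋆, a^⋆ the stellar welding maps on simplicial cochains: (1) i^⋆ and p^⋆ are cochain maps (d∘i^⋆ = i^⋆∘d and d∘p^⋆ = p^⋆∘d); (2) p^⋆∘i^⋆ = id on C^•(Δ^n); (3) d∘a^⋆ + a^⋆∘d = id − i^⋆∘p^⋆ on C^•(⋆_I Δ^n); (4) a^⋆∘a^⋆ = 0; (5) a^⋆∘i^⋆ = 0; (6) p^⋆∘a^⋆ = 0. In other words, (i^⋆, p^⋆, a^⋆) is a special deformation retraction of C^•(⋆_I Δ^n) onto C^•(Δ^n). -/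
open scoped BigOperators Classical

noncomputable section

/-- The vertex set `{⋆, 0, …, n}` of the stellar subdivision, with the star
vertex `⋆ = ⊥` ordered first. -/
abbrev VV (n : ℕ) := WithBot (Fin (n + 1))

instance (n : ℕ) : Fintype (VV n) := inferInstanceAs (Fintype (Option (Fin (n + 1))))

/-- (Ambient space of) simplicial chains/cochains: the free ℝ-vector space on
finsets of vertices, realized as functions. -/
abbrev Ch (n : ℕ) := Finset (VV n) → ℝ

/-- The basis chain corresponding to the simplex `σ`. -/
def deltaCh {n : ℕ} (σ : Finset (VV n)) : Ch n := fun τ => if τ = σ then 1 else 0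

/-- Linear extension of a map given on basis simplices. -/
def liftCh {n : ℕ} (f : Finset (VV n) → Ch n) (x : Ch n) : Ch n :=
  fun τ => ∑ σ : Finset (VV n), x σ * f σ τ

/-- Index of the vertex `v` in the increasing enumeration of `σ`. -/
def idxIn {n : ℕ} (σ : Finset (VV n)) (v : VV n) : ℕ :=
  (σ.filter (fun u => u < v)).card

/-- Sign `(-1)^a` where `a` is the index of `v` in `σ`. -/
def sgn {n : ℕ} (σ : Finset (VV n)) (v : VV n) : ℝ := (-1) ^ idxIn σ v

/-- The boundary of a basis simplex: `∂[v_0,…,v_l] = ∑ (-1)^a [v_0,…,v̂_a,…,v_l]`. -/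
def bdryGen {n : ℕ} (σ : Finset (VV n)) : Ch n :=
  ∑ v ∈ σ, sgn σ v • deltaCh (σ.erase v)

/-- A finset of `{0,…,n}` regarded as a finset of vertices. -/
def coeIm {n : ℕ} (I : Finset (Fin (n + 1))) : Finset (VV n) :=
  I.image (fun i => (i : VV n))

/-- Simplices of the stellar subdivision `⋆_I Δ^n`: the nonempty `J ⊆ {0,…,n}`
with `J ⊉ I`, together with `{⋆} ∪ J` for such `J`. -/
def IsSubd {n : ℕ} (I : Finset (Fin (n + 1))) (σ : Finset (VV n)) : Prop :=
  σ.Nonempty ∧ ¬ coeIm I ⊆ σ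

/-- Simplices of `Δ^n`: nonempty subsets of `{0,…,n}`. -/
def IsDel {n : ℕ} (σ : Finset (VV n)) : Prop := σ.Nonempty ∧ ⊥ ∉ σ

/-- Coboundary for the subdivision complex `⋆_I Δ^n`, on dual basis cochains:
`(d τ̂) = ∑_{ρ ⊇ τ simplex of ⋆_I Δ^n} ⟨∂ρ, τ⟩ ρ̂`. -/
def dSubGen {n : ℕ} (I : Finset (Fin (n + 1))) (τ : Finset (VV n)) : Ch n :=
  ∑ v : VV n,
    if v ∉ τ ∧ IsSubd I (insert v τ) then
      sgn (insert v τ) v • deltaCh (insert v τ)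
    else 0

/-- Coboundary for `Δ^n`, on dual basis cochains. -/
def dDelGen {n : ℕ} (τ : Finset (VV n)) : Ch n :=
  ∑ v : VV n,
    if v ∉ τ ∧ v ≠ ⊥ then sgn (insert v τ) v • deltaCh (insert v τ) else 0

/-- The stellar welding inclusion `i^⋆` on cochains (values on dual basis). -/
def istarCo {n : ℕ} (I : Finset (Fin (n + 1))) (σ : Finset (VV n)) : Ch n :=
  (if ¬ coeIm I ⊆ σ then deltaCh σ else 0)
    + (I.card : ℝ)⁻¹ •
        ∑ v ∈ σ ∩ coeIm I, sgn σ v • deltaCh (insert ⊥ (σ.erase v))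

/-- The set `I ∖ J` of elements of `I` not occurring in the simplex `σ`. -/
def missing {n : ℕ} (I : Finset (Fin (n + 1))) (σ : Finset (VV n)) :
    Finset (Fin (n + 1)) :=
  I.filter (fun a : Fin (n + 1) => ((a : VV n) ∉ σ))

/-- The stellar welding projection `p^⋆` on cochains (values on dual basis). -/
def pstarCo {n : ℕ} (I : Finset (Fin (n + 1))) (σ : Finset (VV n)) : Ch n :=
  if ⊥ ∈ σ then
    if h : (missing I σ).card = 1 then
      sgn (σ.erase ⊥) (((missing I σ).min' (Finset.card_pos.mp (by omega)) : Fin (n + 1)) : VV n) •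
        deltaCh (insert
          (((missing I σ).min' (Finset.card_pos.mp (by omega)) : Fin (n + 1)) : VV n)
          (σ.erase ⊥))
    else 0
  else deltaCh σ

/-- The stellar welding homotopy `a^⋆` on cochains (values on dual basis). -/
def astarCo {n : ℕ} (I : Finset (Fin (n + 1))) (σ : Finset (VV n)) : Ch n :=
  if ⊥ ∈ σ then
    - (I.card : ℝ)⁻¹ •
        ∑ v ∈ (σ.erase ⊥) ∩ coeIm I,
          sgn (σ.erase ⊥) v • deltaCh (insert ⊥ ((σ.erase ⊥).erase v))
  else 0

/-!
The faces of the full simplex on `{⋆, 0, …, n}` form a basis of the exterior algebra on these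
vertices, and every map in the statement is a noncommutative polynomial in wedges and
contractions with vertices and the projection onto faces containing `I`
(see `StellarRelations`). Wedge and contraction satisfy the canonical anticommutation relations
`ε_v ι_w + ι_w ε_v = δ_vw`; summed over the vertices of `Δ^n` and of `I` they give Cartan's
formula `d h + h d = 1` for the contraction `h` with `∑_{i ∈ I} eᵢ` divided by `|I|`, which is
what makes `a^⋆` a homotopy. All six identities then hold in any ring where these relations do.
-/

/-- `s`, `t`: wedge and contraction with `e_⋆`; `d`: wedge with `∑ eᵢ`, the coboundary of `Δ^n`;
`dI`: wedge with `∑_{i ∈ I} eᵢ`; `h`: contraction with `∑_{i ∈ I} eᵢ`, divided by `|I|`;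
`r`: projection onto the faces containing `I`. The coboundary of `⋆_I Δ^n` is then
`(1 - r) * (s + d)`, `p^⋆ = t * s + r * dI * t`, `a^⋆ = -(s * h * t)`, and `i^⋆` agrees with
`1 - r + s * h` on the cochains of `Δ^n`, i.e. on the image of `t * s`. -/
structure StellarRelations {A : Type*} [Ring A] (s t d dI h r : A) : Prop where
  s_mul_self : s * s = 0
  t_mul_self : t * t = 0
  s_t : s * t + t * s = 1
  s_d : s * d + d * s = 0
  s_dI : s * dI + dI * s = 0
  s_h : s * h + h * s = 0
  t_d : t * d + d * t = 0
  t_dI : t * dI + dI * t = 0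
  t_h : t * h + h * t = 0
  h_mul_self : h * h = 0
  d_h : d * h + h * d = 1
  dI_h : dI * h + h * dI = 1
  dI_mul_self : dI * dI = 0
  d_dI : d * dI + dI * d = 0
  r_mul_self : r * r = r
  r_s : r * s = s * r
  r_t : r * t = t * r
  r_h : r * h = 0
  dI_r : dI * r = 0
  r_d : r * d = r * dI + d * r

namespace StellarRelations

variable {A : Type*} [Ring A] {s t d dI h r : A} (R : StellarRelations s t d dI h r)
include R

theorem one_sub_r_s : (1 - r) * s = s * (1 - r) := by
  linear_combination (norm := noncomm_ring) -R.r_s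

theorem one_sub_r_t : (1 - r) * t = t * (1 - r) := by
  linear_combination (norm := noncomm_ring) -R.r_t

theorem one_sub_r_h : (1 - r) * h = h := by
  linear_combination (norm := noncomm_ring) -R.r_h

theorem r_d_r : r * d * r = d * r := by
  linear_combination (norm := noncomm_ring) R.r_d * r + r * R.dI_r + d * R.r_mul_self

theorem r_dI_h : r * dI * h = r := by
  linear_combination (norm := noncomm_ring) r * R.dI_h - R.r_h * dI

theorem t_h_t : t * h * t = 0 := by
  linear_combination (norm := noncomm_ring) R.t_h * t - h * R.t_mul_self

theorem t_s_t : t * s * t = t := by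
  linear_combination (norm := noncomm_ring) t * R.s_t - R.t_mul_self * s

theorem ts_mul_ts : t * s * (t * s) = t * s := by
  linear_combination (norm := noncomm_ring) t * R.s_t * s - R.t_mul_self * s * s

theorem ts_mul_d : t * s * d = d * (t * s) := by
  linear_combination (norm := noncomm_ring) t * R.s_d - R.t_d * s

theorem ts_mul_r : t * s * r = r * (t * s) := by
  linear_combination (norm := noncomm_ring) -R.r_t * s - t * R.r_s

theorem ts_mul_projection : t * s * (t * s + r * dI * t) = t * s + r * dI * t := by
  linear_combination (norm := noncomm_ring) R.ts_mul_ts + R.ts_mul_r * dI * t + r * t * R.s_dI * t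
    - r * R.t_dI * s * t + r * dI * R.t_s_t

theorem differential_comp_inclusion :
    (1 - r) * (s + d) * (1 - r + s * h) = (1 - r + s * h) * d := by
  calc (1 - r) * (s + d) * (1 - r + s * h)
        = s * (1 - r) + (1 - r) * d - s * (1 - r) * d * h := by
        linear_combination (norm := noncomm_ring) R.one_sub_r_s * (1 - r) + s * R.r_mul_self
          + (1 - r) * R.s_mul_self * h + R.r_d_r + (1 - r) * R.s_d * h - R.one_sub_r_s * d * h
    _ = (1 - r + s * h) * d := by
        linear_combination (norm := noncomm_ring) s * r * R.d_h - s * R.r_h * d - s * R.d_h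

theorem differential_comp_projection :
    d * (t * s + r * dI * t) * (1 - r)
      = (t * s + r * dI * t) * ((1 - r) * (s + d)) * (1 - r) := by
  have h : d * (t * s + r * dI * t) = (t * s + r * dI * t) * ((1 - r) * (s + d)) + t * s * d * r :=
    calc d * (t * s + r * dI * t) = d * t * s + r * d * dI * t := by
          linear_combination (norm := noncomm_ring) -R.r_d * dI * t - r * R.dI_mul_self * t
      _ = t * s * d - t * s * r * d + r * dI * t * s + r * d * dI * t + t * s * d * r := by
          linear_combination (norm := noncomm_ring) -R.ts_mul_d + R.ts_mul_r * d + r * R.ts_mul_d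
            + R.r_d * t * s - d * R.ts_mul_r - R.ts_mul_d * r
      _ = (t * s + r * dI * t) * ((1 - r) * (s + d)) + t * s * d * r := by
          linear_combination (norm := noncomm_ring) -(t * R.s_mul_self - t * s * R.r_s
            - t * R.s_mul_self * r - r * R.dI_r * t * s + r * dI * R.r_t * s - r * R.dI_r * t * d
            + r * dI * R.r_t * d + r * dI * R.t_d - r * R.d_dI * t)
  linear_combination (norm := noncomm_ring) h * (1 - r) - t * s * d * R.r_mul_self

theorem projection_comp_inclusion :
    (t * s + r * dI * t) * (1 - r + s * h) * (t * s) = t * s := by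
  calc (t * s + r * dI * t) * (1 - r + s * h) * (t * s)
        = (1 - r) * (t * s) + r * dI * h * (t * s) := by
        linear_combination (norm := noncomm_ring) -R.one_sub_r_t * s * t * s
          - t * R.one_sub_r_s * t * s + R.ts_mul_ts - r * R.ts_mul_ts
          + t * R.s_mul_self * h * t * s - r * dI * R.one_sub_r_t * t * s
          - r * R.dI_r * t * t * s + r * dI * R.t_mul_self * s + r * dI * R.s_t * h * t * s
          - r * dI * s * R.t_h_t * s
    _ = t * s := by linear_combination (norm := noncomm_ring) R.r_dI_h * (t * s)

theorem homotopy_comp_self : -(s * h * t) * -(s * h * t) = 0 := by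
  linear_combination (norm := noncomm_ring) s * h * R.s_t * h * t - s * R.s_h * t * h * t
    + R.s_mul_self * h * t * h * t + s * R.h_mul_self * t

theorem homotopy_comp_inclusion : s * h * t * (1 - r + s * h) * (t * s) = 0 := by
  linear_combination (norm := noncomm_ring) s * h * R.t_mul_self * s - s * h * t * R.r_t * s
    - s * h * R.t_mul_self * r * s + R.homotopy_comp_self * s

theorem projection_comp_homotopy :
    (t * s + r * dI * t) * -(s * h * t) * (1 - r) = 0 := by
  linear_combination (norm := noncomm_ring) -t * R.s_mul_self * h * t * (1 - r)
    - r * dI * R.s_t * h * t * (1 - r) + r * dI * s * R.t_h_t * (1 - r) - R.r_dI_h * t * (1 - r)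
    - R.r_t * (1 - r) + t * R.r_mul_self

theorem homotopy_formula :
    ((1 - r) * (s + d) * -(s * h * t) + -(s * h * t) * ((1 - r) * (s + d))
      + (1 - r + s * h) * (t * s + r * dI * t)) * (1 - r) = 1 - r := by
  have hda : (1 - r) * (s + d) * -(s * h * t) = s * (1 - r) * t - s * t * h * d := by
    linear_combination (norm := noncomm_ring) -(1 - r) * R.s_mul_self * h * t
      - (1 - r) * R.s_d * h * t + R.one_sub_r_s * d * h * t + s * (1 - r) * R.d_h * t
      - s * R.one_sub_r_h * d * t - s * h * R.t_d + s * R.t_h * d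
  have had : -(s * h * t) * ((1 - r) * (s + d))
      = -(s * h * (1 - r)) + s * t * h * d * (1 - r) - s * t * h * r * dI := by
    linear_combination (norm := noncomm_ring) s * h * R.one_sub_r_t * s - s * h * (1 - r) * R.s_t
      + s * h * R.one_sub_r_s * t + s * R.s_h * (1 - r) * t - R.s_mul_self * h * (1 - r) * t
      - s * R.t_h * (1 - r) * d - s * t * h * R.r_d
  have hip : (1 - r + s * h) * (t * s + r * dI * t)
      = 1 - r + s * h - s * (1 - r) * t + s * t * h * r * dI := by
    linear_combination (norm := noncomm_ring) (1 - r) * R.s_t - R.r_mul_self * dI * t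
      + s * h * R.s_t - s * R.s_h * t + R.s_mul_self * h * t - s * R.t_h * r * dI
      + s * h * r * R.t_dI - s * h * R.r_t * dI + R.r_s * t
  linear_combination (norm := noncomm_ring) (hda + had + hip) * (1 - r) + R.r_mul_self
    - s * h * R.r_mul_self + s * t * h * d * R.r_mul_self

variable {x : A} (hx : x * (t * s) = (1 - r + s * h) * (t * s))
include hx

theorem differential_comp_of_mul_ts_eq :
    (1 - r) * (s + d) * x * (t * s) = x * d * (t * s) := by
  linear_combination (norm := noncomm_ring) (1 - r) * (s + d) * hx - hx * d * (t * s)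
    + x * R.ts_mul_d * (t * s) + x * d * R.ts_mul_ts + R.differential_comp_inclusion * (t * s)
    - (1 - r + s * h) * R.ts_mul_d * (t * s) - (1 - r + s * h) * d * R.ts_mul_ts

theorem projection_comp_of_mul_ts_eq : (t * s + r * dI * t) * x * (t * s) = t * s := by
  linear_combination (norm := noncomm_ring) (t * s + r * dI * t) * hx + R.projection_comp_inclusion

theorem homotopy_formula_of_mul_ts_eq :
    ((1 - r) * (s + d) * -(s * h * t) + -(s * h * t) * ((1 - r) * (s + d))
      + x * (t * s + r * dI * t)) * (1 - r) = 1 - r := by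
  linear_combination (norm := noncomm_ring) R.homotopy_formula - x * R.ts_mul_projection * (1 - r)
    + hx * (t * s + r * dI * t) * (1 - r) + (1 - r + s * h) * R.ts_mul_projection * (1 - r)

theorem homotopy_comp_of_mul_ts_eq : -(s * h * t) * x * (t * s) = 0 := by
  linear_combination (norm := noncomm_ring) -(s * h * t) * hx - R.homotopy_comp_inclusion

end StellarRelations

namespace Stellar

variable {n : ℕ}

theorem sum_mul_sum_add {A ι : Type*} [Ring A] (S T : Finset ι) (X Y : ι → A) :
    (∑ v ∈ S, X v) * (∑ w ∈ T, Y w) + (∑ w ∈ T, Y w) * (∑ v ∈ S, X v)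
      = ∑ v ∈ S, ∑ w ∈ T, (X v * Y w + Y w * X v) := by
  simp only [Finset.sum_mul_sum, Finset.sum_add_distrib]
  rw [Finset.sum_comm (s := T)]

theorem eq_zero_of_add_self_eq_zero {M : Type*} [AddCommGroup M] [Module ℝ M] {x : M}
    (h : x + x = 0) : x = 0 := by
  rw [← two_smul ℝ x] at h
  exact (smul_eq_zero.mp h).resolve_left two_ne_zero

theorem apply_eq_of_mul_eq {R M : Type*} [Semiring R] [AddCommMonoid M] [Module R M]
    {F G E : Module.End R M} {x : M} (h : F * E = G * E)
    (hx : E x = x) : F x = G x := by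
  rw [← hx, ← Module.End.mul_apply, h, Module.End.mul_apply]

theorem apply_eq_self_of_mul_eq {R M : Type*} [Semiring R] [AddCommMonoid M] [Module R M]
    {F E : Module.End R M} {x : M} (h : F * E = E)
    (hx : E x = x) : F x = x := by
  rw [← hx, ← Module.End.mul_apply, h]

theorem apply_eq_zero_of_mul_eq_zero {R M : Type*} [Semiring R] [AddCommMonoid M] [Module R M]
    {F E : Module.End R M} {x : M} (h : F * E = 0)
    (hx : E x = x) : F x = 0 := by
  rw [← hx, ← Module.End.mul_apply, h, LinearMap.zero_apply]

def liftChLin (f : Finset (VV n) → Ch n) : Module.End ℝ (Ch n) where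
  toFun := liftCh f
  map_add' x y := by funext τ; simp [liftCh, add_mul, Finset.sum_add_distrib]
  map_smul' c x := by funext τ; simp [liftCh, Finset.mul_sum, mul_assoc]

theorem liftChLin_deltaCh (f : Finset (VV n) → Ch n) (σ : Finset (VV n)) :
    liftChLin f (deltaCh σ) = f σ := by
  funext τ
  simp [liftChLin, liftCh, deltaCh]

theorem liftCh_eq_liftChLin_mul (g f : Finset (VV n) → Ch n) (σ : Finset (VV n)) :
    liftCh g (f σ) = (liftChLin g * liftChLin f) (deltaCh σ) := by
  rw [Module.End.mul_apply, liftChLin_deltaCh]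
  rfl

theorem ext_deltaCh {F G : Module.End ℝ (Ch n)} (h : ∀ σ, F (deltaCh σ) = G (deltaCh σ)) :
    F = G := by
  have hx : ∀ x : Ch n, ∑ σ, x σ • deltaCh σ = x := fun x => by
    funext τ
    simp [deltaCh]
  refine LinearMap.ext fun x => ?_
  rw [← hx x]
  simp only [map_sum, map_smul, h]

theorem sgn_insert_self (σ : Finset (VV n)) (v : VV n) : sgn (insert v σ) v = sgn σ v := by
  simp [sgn, idxIn, Finset.filter_insert]

theorem sgn_insert {σ : Finset (VV n)} {w : VV n} (hw : w ∉ σ) (v : VV n) :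
    sgn (insert w σ) v = (if w < v then -1 else 1) * sgn σ v := by
  unfold sgn idxIn
  rw [Finset.filter_insert]
  split_ifs <;> simp [Finset.card_insert_of_notMem, hw, pow_succ, mul_comm]

theorem sgn_erase {σ : Finset (VV n)} {w : VV n} (hw : w ∈ σ) (v : VV n) :
    sgn (σ.erase w) v = (if w < v then -1 else 1) * sgn σ v := by
  conv_rhs => rw [← Finset.insert_erase hw, sgn_insert (Finset.notMem_erase w σ), ← mul_assoc]
  split_ifs <;> norm_num

theorem sgn_mul_self (σ : Finset (VV n)) (v : VV n) : sgn σ v * sgn σ v = 1 := by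
  simp [sgn, ← pow_add, ← two_mul, pow_mul]

theorem sgn_bot (σ : Finset (VV n)) : sgn σ ⊥ = 1 := by
  simp [sgn, idxIn]

theorem ite_lt_eq_neg {v w : VV n} (h : v ≠ w) :
    (if w < v then -1 else 1 : ℝ) = -(if v < w then -1 else 1) := by
  rcases h.lt_or_gt with h | h
  · simp [h, h.not_gt]
  · simp [h, h.not_gt]

def wedge (v : VV n) : Module.End ℝ (Ch n) :=
  liftChLin fun τ => if v ∈ τ then 0 else sgn (insert v τ) v • deltaCh (insert v τ)

def contract (v : VV n) : Module.End ℝ (Ch n) :=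
  liftChLin fun τ => if v ∈ τ then sgn τ v • deltaCh (τ.erase v) else 0

theorem wedge_deltaCh (v : VV n) (τ : Finset (VV n)) :
    wedge v (deltaCh τ) = if v ∈ τ then 0 else sgn (insert v τ) v • deltaCh (insert v τ) :=
  liftChLin_deltaCh _ _

theorem contract_deltaCh (v : VV n) (τ : Finset (VV n)) :
    contract v (deltaCh τ) = if v ∈ τ then sgn τ v • deltaCh (τ.erase v) else 0 :=
  liftChLin_deltaCh _ _

theorem wedge_mul_wedge (v w : VV n) : wedge v * wedge w = -(wedge w * wedge v) := by
  refine ext_deltaCh fun τ => ?_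
  simp only [Module.End.mul_apply, LinearMap.neg_apply, wedge_deltaCh]
  rcases eq_or_ne v w with rfl | hvw
  · by_cases hv : v ∈ τ <;> simp [hv, wedge_deltaCh]
  by_cases hv : v ∈ τ
  · by_cases hw : w ∈ τ <;> simp [hv, hw, wedge_deltaCh]
  by_cases hw : w ∈ τ
  · simp [hv, hw, wedge_deltaCh]
  have hwv : w ∉ insert v τ := by simp [hw, hvw.symm]
  have hvw' : v ∉ insert w τ := by simp [hv, hvw]
  simp only [hv, hw, hwv, hvw', if_false, map_smul, wedge_deltaCh, smul_smul, ← neg_smul,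
    Finset.insert_comm v w]
  congr 1
  simp only [sgn_insert hwv v, sgn_insert_self]
  rw [sgn_insert hv w]
  linear_combination (sgn τ w * sgn τ v) * ite_lt_eq_neg hvw

theorem contract_mul_contract (v w : VV n) :
    contract v * contract w = -(contract w * contract v) := by
  refine ext_deltaCh fun τ => ?_
  simp only [Module.End.mul_apply, LinearMap.neg_apply, contract_deltaCh]
  rcases eq_or_ne v w with rfl | hvw
  · by_cases hv : v ∈ τ <;> simp [hv, contract_deltaCh]
  by_cases hv : v ∈ τ
  swap
  · by_cases hw : w ∈ τ <;> simp [hv, hw, contract_deltaCh]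
  by_cases hw : w ∈ τ
  swap
  · simp [hv, hw, contract_deltaCh]
  have hwv : w ∈ τ.erase v := Finset.mem_erase.2 ⟨hvw.symm, hw⟩
  have hvw' : v ∈ τ.erase w := Finset.mem_erase.2 ⟨hvw, hv⟩
  simp only [hv, hw, hwv, hvw', if_true, map_smul, contract_deltaCh, smul_smul, ← neg_smul,
    Finset.erase_right_comm (a := v)]
  congr 1
  rw [sgn_erase hv, sgn_erase hw]
  linear_combination (sgn τ v * sgn τ w) * ite_lt_eq_neg hvw

theorem wedge_mul_contract_add (v w : VV n) :
    wedge v * contract w + contract w * wedge v = if v = w then 1 else 0 := by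
  refine ext_deltaCh fun τ => ?_
  simp only [LinearMap.add_apply, Module.End.mul_apply, wedge_deltaCh, contract_deltaCh]
  rcases eq_or_ne v w with rfl | hvw
  · by_cases hv : v ∈ τ
    · simp [hv, wedge_deltaCh, smul_smul, Finset.insert_erase hv, sgn_mul_self]
    · simp [hv, contract_deltaCh, smul_smul, Finset.erase_insert hv, sgn_insert_self,
        sgn_mul_self]
  by_cases hv : v ∈ τ
  · by_cases hw : w ∈ τ <;> simp [hv, hw, hvw, wedge_deltaCh]
  by_cases hw : w ∈ τ
  swap
  · simp [hv, hw, hvw, contract_deltaCh, Ne.symm hvw]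
  have hvw' : v ∉ τ.erase w := fun h => hv (Finset.mem_of_mem_erase h)
  have hwv : w ∈ insert v τ := Finset.mem_insert_of_mem hw
  simp only [hv, hw, hvw, hvw', hwv, if_true, if_false, map_smul, wedge_deltaCh,
    contract_deltaCh, smul_smul, Finset.erase_insert_of_ne hvw, ← add_smul]
  rw [LinearMap.zero_apply, sgn_insert_self, sgn_insert_self, sgn_erase hw, sgn_insert hv w]
  convert zero_smul ℝ (deltaCh (insert v (τ.erase w)))
  linear_combination (sgn τ v * sgn τ w) * ite_lt_eq_neg hvw

def wedgeSum (S : Finset (VV n)) : Module.End ℝ (Ch n) := ∑ v ∈ S, wedge v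

def contractSum (S : Finset (VV n)) : Module.End ℝ (Ch n) := ∑ v ∈ S, contract v

theorem wedgeSum_anticomm (S T : Finset (VV n)) :
    wedgeSum S * wedgeSum T + wedgeSum T * wedgeSum S = 0 := by
  rw [wedgeSum, wedgeSum, sum_mul_sum_add]
  exact Finset.sum_eq_zero fun v _ => Finset.sum_eq_zero fun w _ => by
    rw [wedge_mul_wedge, neg_add_cancel]

theorem contractSum_anticomm (S T : Finset (VV n)) :
    contractSum S * contractSum T + contractSum T * contractSum S = 0 := by
  rw [contractSum, contractSum, sum_mul_sum_add]
  exact Finset.sum_eq_zero fun v _ => Finset.sum_eq_zero fun w _ => by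
    rw [contract_mul_contract, neg_add_cancel]

theorem wedgeSum_contractSum (S T : Finset (VV n)) :
    wedgeSum S * contractSum T + contractSum T * wedgeSum S = ((S ∩ T).card : ℝ) • 1 := by
  rw [wedgeSum, contractSum, sum_mul_sum_add]
  simp [wedge_mul_contract_add, Nat.cast_smul_eq_nsmul]

theorem wedgeSum_mul_self (S : Finset (VV n)) : wedgeSum S * wedgeSum S = 0 :=
  eq_zero_of_add_self_eq_zero (wedgeSum_anticomm S S)

theorem contractSum_mul_self (S : Finset (VV n)) : contractSum S * contractSum S = 0 :=
  eq_zero_of_add_self_eq_zero (contractSum_anticomm S S)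

def projContaining (A : Finset (VV n)) : Module.End ℝ (Ch n) :=
  liftChLin fun τ => if A ⊆ τ then deltaCh τ else 0

theorem projContaining_deltaCh (A τ : Finset (VV n)) :
    projContaining A (deltaCh τ) = if A ⊆ τ then deltaCh τ else 0 :=
  liftChLin_deltaCh _ _

theorem projContaining_mul_self (A : Finset (VV n)) :
    projContaining A * projContaining A = projContaining A := by
  refine ext_deltaCh fun τ => ?_
  by_cases h : A ⊆ τ <;> simp [projContaining_deltaCh, h]

theorem projContaining_mul_wedge_of_notMem {A : Finset (VV n)} {v : VV n} (hv : v ∉ A) :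
    projContaining A * wedge v = wedge v * projContaining A := by
  refine ext_deltaCh fun τ => ?_
  by_cases h : A ⊆ τ <;> by_cases hvτ : v ∈ τ <;>
    simp [projContaining_deltaCh, wedge_deltaCh, h, hvτ, Finset.subset_insert_iff_of_notMem hv]

theorem projContaining_mul_contract_of_notMem {A : Finset (VV n)} {v : VV n} (hv : v ∉ A) :
    projContaining A * contract v = contract v * projContaining A := by
  refine ext_deltaCh fun τ => ?_
  by_cases h : A ⊆ τ <;> by_cases hvτ : v ∈ τ <;>
    simp [projContaining_deltaCh, contract_deltaCh, h, hvτ, Finset.subset_erase, hv]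

theorem projContaining_mul_contract_of_mem {A : Finset (VV n)} {v : VV n} (hv : v ∈ A) :
    projContaining A * contract v = 0 := by
  refine ext_deltaCh fun τ => ?_
  by_cases hvτ : v ∈ τ <;>
    simp [projContaining_deltaCh, contract_deltaCh, hvτ, Finset.subset_erase, hv]

theorem wedge_mul_projContaining_of_mem {A : Finset (VV n)} {v : VV n} (hv : v ∈ A) :
    wedge v * projContaining A = 0 := by
  refine ext_deltaCh fun τ => ?_
  by_cases h : A ⊆ τ
  · simp [projContaining_deltaCh, wedge_deltaCh, h, h hv]
  · simp [projContaining_deltaCh, h]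

theorem projContaining_mul_wedgeSum {A S : Finset (VV n)} (hA : A ⊆ S) :
    projContaining A * wedgeSum S
      = projContaining A * wedgeSum A + wedgeSum S * projContaining A := by
  have hv : ∀ v, projContaining A * wedge v
      = (if v ∈ A then projContaining A * wedge v else 0) + wedge v * projContaining A := by
    intro v
    by_cases hv : v ∈ A
    · simp [hv, wedge_mul_projContaining_of_mem hv]
    · simp [hv, projContaining_mul_wedge_of_notMem hv]
  simp only [wedgeSum, Finset.mul_sum, Finset.sum_mul]
  rw [Finset.sum_congr rfl fun v _ => hv v, Finset.sum_add_distrib, Finset.sum_ite_mem,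
    Finset.inter_eq_right.mpr hA]

theorem wedgeSum_singleton (v : VV n) : wedgeSum {v} = wedge v := Finset.sum_singleton _ _

theorem contractSum_singleton (v : VV n) : contractSum {v} = contract v :=
  Finset.sum_singleton _ _

theorem bot_notMem_coeIm (I : Finset (Fin (n + 1))) : (⊥ : VV n) ∉ coeIm I := by
  simp [coeIm]

theorem card_coeIm (I : Finset (Fin (n + 1))) : (coeIm (n := n) I).card = I.card := by
  simp only [coeIm, Finset.pure_def, Finset.bind_def, Finset.sup_singleton_apply, Finset.image_id']
  convert Finset.card_image_of_injective I WithBot.coe_injective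

theorem stellarRelations {I : Finset (Fin (n + 1))} (hI : I.Nonempty) :
    StellarRelations (wedge ⊥) (contract ⊥) (wedgeSum (Finset.univ.erase ⊥))
      (wedgeSum (coeIm I)) ((I.card : ℝ)⁻¹ • contractSum (coeIm I))
      (projContaining (coeIm I)) := by
  have hbot := bot_notMem_coeIm I
  have hk : (I.card : ℝ) ≠ 0 := by simpa using hI.ne_empty
  have hA : coeIm I ⊆ Finset.univ.erase ⊥ := fun v hv =>
    Finset.mem_erase.2 ⟨fun h => hbot (h ▸ hv), Finset.mem_univ v⟩
  have hwc : ∀ S T : Finset (VV n), Disjoint S T →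
      wedgeSum S * contractSum T + contractSum T * wedgeSum S = 0 := fun S T h => by
    simp [wedgeSum_contractSum, Finset.disjoint_iff_inter_eq_empty.mp h]
  have hcw : ∀ S T : Finset (VV n), Disjoint S T →
      contractSum T * wedgeSum S + wedgeSum S * contractSum T = 0 := fun S T h => by
    rw [add_comm, hwc S T h]
  have hcard : ∀ S : Finset (VV n), coeIm I ⊆ S →
      (I.card : ℝ)⁻¹ •
        (wedgeSum S * contractSum (coeIm I) + contractSum (coeIm I) * wedgeSum S) = 1 :=
    fun S hS => by
    rw [wedgeSum_contractSum, Finset.inter_eq_right.mpr hS, card_coeIm, smul_smul,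
      inv_mul_cancel₀ hk, one_smul]
  simp only [← wedgeSum_singleton, ← contractSum_singleton] at *
  refine
    { s_mul_self := wedgeSum_mul_self _
      t_mul_self := contractSum_mul_self _
      s_t := by simp [wedgeSum_contractSum]
      s_d := wedgeSum_anticomm _ _
      s_dI := wedgeSum_anticomm _ _
      s_h := by
        rw [mul_smul_comm, smul_mul_assoc, ← smul_add, hwc _ _ (by simpa using hbot), smul_zero]
      t_d := hcw _ _ (by simp)
      t_dI := hcw _ _ (by simpa using hbot)
      t_h := by
        rw [mul_smul_comm, smul_mul_assoc, ← smul_add, contractSum_anticomm, smul_zero]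
      h_mul_self := by rw [smul_mul_smul_comm, contractSum_mul_self, smul_zero]
      d_h := by rw [mul_smul_comm, smul_mul_assoc, ← smul_add, hcard _ hA]
      dI_h := by rw [mul_smul_comm, smul_mul_assoc, ← smul_add, hcard _ subset_rfl]
      dI_mul_self := wedgeSum_mul_self _
      d_dI := wedgeSum_anticomm _ _
      r_mul_self := projContaining_mul_self _
      r_s := by
        rw [wedgeSum_singleton]
        exact projContaining_mul_wedge_of_notMem (by simpa using hbot)
      r_t := by
        rw [contractSum_singleton]
        exact projContaining_mul_contract_of_notMem (by simpa using hbot)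
      r_h := by
        rw [mul_smul_comm, contractSum, Finset.mul_sum,
          Finset.sum_eq_zero fun v hv => projContaining_mul_contract_of_mem hv, smul_zero]
      dI_r := by
        rw [wedgeSum, Finset.sum_mul]
        exact Finset.sum_eq_zero fun v hv => wedge_mul_projContaining_of_mem hv
      r_d := projContaining_mul_wedgeSum hA }

theorem wedgeSum_deltaCh (S τ : Finset (VV n)) :
    wedgeSum S (deltaCh τ)
      = ∑ v ∈ S, if v ∈ τ then 0 else sgn (insert v τ) v • deltaCh (insert v τ) := by
  simp [wedgeSum, LinearMap.sum_apply, wedge_deltaCh]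

theorem contractSum_deltaCh (S τ : Finset (VV n)) :
    contractSum S (deltaCh τ) = ∑ v ∈ τ ∩ S, sgn τ v • deltaCh (τ.erase v) := by
  simp [contractSum, LinearMap.sum_apply, contract_deltaCh, Finset.inter_comm]

theorem wedge_bot_deltaCh {τ : Finset (VV n)} (h : ⊥ ∉ τ) :
    wedge ⊥ (deltaCh τ) = deltaCh (insert ⊥ τ) := by
  simp [wedge_deltaCh, h, sgn_bot]

theorem contract_bot_deltaCh {τ : Finset (VV n)} (h : ⊥ ∈ τ) :
    contract ⊥ (deltaCh τ) = deltaCh (τ.erase ⊥) := by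
  simp [contract_deltaCh, h, sgn_bot]

theorem contract_bot_wedge_bot_deltaCh (τ : Finset (VV n)) :
    contract ⊥ (wedge ⊥ (deltaCh τ)) = if ⊥ ∈ τ then 0 else deltaCh τ := by
  by_cases h : ⊥ ∈ τ
  · simp [wedge_deltaCh, h]
  · simp [wedge_bot_deltaCh h, contract_bot_deltaCh, h]

theorem liftChLin_dDelGen : liftChLin dDelGen = wedgeSum (Finset.univ.erase (⊥ : VV n)) := by
  refine ext_deltaCh fun τ => ?_
  rw [liftChLin_deltaCh, wedgeSum_deltaCh, dDelGen, ← Finset.filter_ne', Finset.sum_filter]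
  refine Finset.sum_congr rfl fun v _ => ?_
  by_cases hv : v ∈ τ <;> by_cases hb : v = ⊥ <;> simp [hv, hb]

theorem liftChLin_dSubGen (I : Finset (Fin (n + 1))) :
    liftChLin (dSubGen I)
      = (1 - projContaining (coeIm I)) * (wedge ⊥ + wedgeSum (Finset.univ.erase ⊥)) := by
  rw [wedgeSum, Finset.add_sum_erase _ _ (Finset.mem_univ _)]
  refine ext_deltaCh fun τ => ?_
  rw [liftChLin_deltaCh, Module.End.mul_apply, ← wedgeSum, wedgeSum_deltaCh, map_sum, dSubGen]
  refine Finset.sum_congr rfl fun v _ => ?_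
  by_cases hv : v ∈ τ
  · simp [hv]
  by_cases hA : coeIm I ⊆ insert v τ <;> simp [hv, hA, IsSubd, projContaining_deltaCh]

theorem wedge_bot_contractSum_deltaCh {A τ : Finset (VV n)} (hτ : ⊥ ∉ τ) :
    wedge ⊥ (contractSum A (deltaCh τ))
      = ∑ v ∈ τ ∩ A, sgn τ v • deltaCh (insert ⊥ (τ.erase v)) := by
  rw [contractSum_deltaCh, map_sum]
  refine Finset.sum_congr rfl fun v _ => ?_
  rw [map_smul, wedge_bot_deltaCh fun h => hτ (Finset.mem_of_mem_erase h)]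

theorem liftChLin_astarCo (I : Finset (Fin (n + 1))) :
    liftChLin (astarCo I)
      = -(wedge ⊥ * ((I.card : ℝ)⁻¹ • contractSum (coeIm I)) * contract ⊥) := by
  refine ext_deltaCh fun σ => ?_
  rw [liftChLin_deltaCh, astarCo]
  split_ifs with h
  · simp only [LinearMap.neg_apply, Module.End.mul_apply, LinearMap.smul_apply, map_smul,
      contract_bot_deltaCh h, wedge_bot_contractSum_deltaCh (Finset.notMem_erase ⊥ σ), neg_smul]
  · simp [contract_deltaCh, h]

theorem liftChLin_istarCo_mul (I : Finset (Fin (n + 1))) :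
    liftChLin (istarCo I) * (contract ⊥ * wedge ⊥)
      = (1 - projContaining (coeIm I) + wedge ⊥ * ((I.card : ℝ)⁻¹ • contractSum (coeIm I)))
        * (contract ⊥ * wedge ⊥) := by
  refine ext_deltaCh fun σ => ?_
  simp only [Module.End.mul_apply, contract_bot_wedge_bot_deltaCh]
  split_ifs with h
  · simp
  · by_cases hA : coeIm I ⊆ σ <;>
      simp [liftChLin_deltaCh, istarCo, projContaining_deltaCh, hA,
        wedge_bot_contractSum_deltaCh h]

theorem missing_eq_singleton_iff {I : Finset (Fin (n + 1))} {J : Finset (VV n)} {a : Fin (n + 1)}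
    (ha : a ∈ I) :
    missing I J = {a} ↔ (a : VV n) ∉ J ∧ coeIm I ⊆ insert (a : VV n) J := by
  simp only [Finset.eq_singleton_iff_unique_mem, missing, Finset.mem_filter, Finset.subset_iff]
  simp only [ha, true_and, and_imp, coeIm, Finset.pure_def, Finset.bind_def,
    Finset.sup_singleton_apply, Finset.image_id', Finset.mem_image, Finset.mem_insert,
    forall_exists_index, forall_apply_eq_imp_iff₂, WithBot.coe_inj, and_congr_right_iff]
  exact fun _ => forall₂_congr fun x _ => by tauto

theorem projContaining_wedgeSum_deltaCh (A J : Finset (VV n)) :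
    projContaining A (wedgeSum A (deltaCh J))
      = ∑ v ∈ A, if v ∉ J ∧ A ⊆ insert v J then
          sgn (insert v J) v • deltaCh (insert v J) else 0 := by
  rw [wedgeSum_deltaCh, map_sum]
  refine Finset.sum_congr rfl fun v _ => ?_
  by_cases hv : v ∈ J <;> by_cases hA : A ⊆ insert v J <;> simp [hv, hA, projContaining_deltaCh]

theorem exists_coe_of_mem_coeIm {I : Finset (Fin (n + 1))} {v : VV n} (hv : v ∈ coeIm I) :
    ∃ a ∈ I, (a : VV n) = v := by
  simpa [coeIm] using hv

theorem projContaining_wedgeSum_deltaCh_of_missing_eq {I : Finset (Fin (n + 1))}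
    {J : Finset (VV n)} {m : Fin (n + 1)} (hm : missing I J = {m}) :
    projContaining (coeIm I) (wedgeSum (coeIm I) (deltaCh J))
      = sgn J m • deltaCh (insert (m : VV n) J) := by
  have hmI : m ∈ I := by
    have := Finset.mem_singleton_self m
    rw [← hm] at this
    exact (Finset.mem_filter.mp this).1
  rw [projContaining_wedgeSum_deltaCh,
    Finset.sum_eq_single_of_mem (m : VV n) (by simp [coeIm, hmI])]
  · rw [if_pos ((missing_eq_singleton_iff hmI).mp hm), sgn_insert_self]
  · intro v hv hvm
    obtain ⟨a, ha, rfl⟩ := exists_coe_of_mem_coeIm hv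
    rw [if_neg]
    rw [← missing_eq_singleton_iff ha, hm]
    exact fun h => hvm (by rw [Finset.singleton_inj.mp h])

theorem projContaining_wedgeSum_deltaCh_of_card_ne_one {I : Finset (Fin (n + 1))}
    {J : Finset (VV n)} (h : (missing I J).card ≠ 1) :
    projContaining (coeIm I) (wedgeSum (coeIm I) (deltaCh J)) = 0 := by
  rw [projContaining_wedgeSum_deltaCh]
  refine Finset.sum_eq_zero fun v hv => ?_
  obtain ⟨a, ha, rfl⟩ := exists_coe_of_mem_coeIm hv
  rw [if_neg]
  rw [← missing_eq_singleton_iff ha]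
  exact fun h' => h (by rw [h', Finset.card_singleton])

theorem missing_erase_bot (I : Finset (Fin (n + 1))) (σ : Finset (VV n)) :
    missing I (σ.erase ⊥) = missing I σ := by
  ext a
  simp [missing]

theorem liftChLin_pstarCo (I : Finset (Fin (n + 1))) :
    liftChLin (pstarCo I)
      = contract ⊥ * wedge ⊥
        + projContaining (coeIm I) * wedgeSum (coeIm I) * contract ⊥ := by
  refine ext_deltaCh fun σ => ?_
  rw [liftChLin_deltaCh, pstarCo, LinearMap.add_apply, Module.End.mul_apply,
    contract_bot_wedge_bot_deltaCh]
  simp only [Module.End.mul_apply]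
  split_ifs with hb hM
  · obtain ⟨m, hm⟩ := Finset.card_eq_one.mp hM
    have hmin : (missing I σ).min' (Finset.card_pos.mp (by omega)) = m := by simp [hm]
    rw [hmin, contract_bot_deltaCh hb, zero_add,
      projContaining_wedgeSum_deltaCh_of_missing_eq (by rw [missing_erase_bot, hm])]
  · rw [contract_bot_deltaCh hb, zero_add,
      projContaining_wedgeSum_deltaCh_of_card_ne_one (by rwa [missing_erase_bot])]
  · simp [contract_deltaCh, hb]

theorem contract_bot_mul_wedge_bot_deltaCh {σ : Finset (VV n)} (hσ : ⊥ ∉ σ) :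
    (contract ⊥ * wedge ⊥ : Module.End ℝ (Ch n)) (deltaCh σ) = deltaCh σ := by
  rw [Module.End.mul_apply, contract_bot_wedge_bot_deltaCh, if_neg hσ]

theorem one_sub_projContaining_deltaCh {A σ : Finset (VV n)} (hσ : ¬ A ⊆ σ) :
    (1 - projContaining A) (deltaCh σ) = deltaCh σ := by
  simp [projContaining_deltaCh, hσ]

section Statements

variable {I : Finset (Fin (n + 1))}

theorem dSubGen_comp_istarCo (hI : I.Nonempty) {σ : Finset (VV n)} (hσ : ⊥ ∉ σ) :
    liftCh (dSubGen I) (istarCo I σ) = liftCh (istarCo I) (dDelGen σ) := by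
  rw [liftCh_eq_liftChLin_mul, liftCh_eq_liftChLin_mul, liftChLin_dSubGen, liftChLin_dDelGen]
  exact apply_eq_of_mul_eq
    ((stellarRelations hI).differential_comp_of_mul_ts_eq (liftChLin_istarCo_mul I))
    (contract_bot_mul_wedge_bot_deltaCh hσ)

theorem dDelGen_comp_pstarCo (hI : I.Nonempty) {σ : Finset (VV n)} (hσ : ¬ coeIm I ⊆ σ) :
    liftCh dDelGen (pstarCo I σ) = liftCh (pstarCo I) (dSubGen I σ) := by
  rw [liftCh_eq_liftChLin_mul, liftCh_eq_liftChLin_mul, liftChLin_dSubGen, liftChLin_dDelGen, liftChLin_pstarCo]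
  exact apply_eq_of_mul_eq (stellarRelations hI).differential_comp_projection
    (one_sub_projContaining_deltaCh hσ)

theorem pstarCo_comp_istarCo (hI : I.Nonempty) {σ : Finset (VV n)} (hσ : ⊥ ∉ σ) :
    liftCh (pstarCo I) (istarCo I σ) = deltaCh σ := by
  rw [liftCh_eq_liftChLin_mul, liftChLin_pstarCo]
  exact apply_eq_self_of_mul_eq
    ((stellarRelations hI).projection_comp_of_mul_ts_eq (liftChLin_istarCo_mul I))
    (contract_bot_mul_wedge_bot_deltaCh hσ)

theorem astarCo_homotopy (hI : I.Nonempty) {σ : Finset (VV n)} (hσ : ¬ coeIm I ⊆ σ) :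
    liftCh (dSubGen I) (astarCo I σ) + liftCh (astarCo I) (dSubGen I σ)
      = deltaCh σ - liftCh (istarCo I) (pstarCo I σ) := by
  refine eq_sub_of_add_eq ?_
  rw [liftCh_eq_liftChLin_mul, liftCh_eq_liftChLin_mul, liftCh_eq_liftChLin_mul, ← LinearMap.add_apply,
    ← LinearMap.add_apply, liftChLin_dSubGen, liftChLin_astarCo, liftChLin_pstarCo]
  exact apply_eq_self_of_mul_eq
    ((stellarRelations hI).homotopy_formula_of_mul_ts_eq (liftChLin_istarCo_mul I))
    (one_sub_projContaining_deltaCh hσ)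

theorem astarCo_comp_astarCo (hI : I.Nonempty) (σ : Finset (VV n)) :
    liftCh (astarCo I) (astarCo I σ) = 0 := by
  rw [liftCh_eq_liftChLin_mul, liftChLin_astarCo, (stellarRelations hI).homotopy_comp_self,
    LinearMap.zero_apply]

theorem astarCo_comp_istarCo (hI : I.Nonempty) {σ : Finset (VV n)} (hσ : ⊥ ∉ σ) :
    liftCh (astarCo I) (istarCo I σ) = 0 := by
  rw [liftCh_eq_liftChLin_mul, liftChLin_astarCo]
  exact apply_eq_zero_of_mul_eq_zero
    ((stellarRelations hI).homotopy_comp_of_mul_ts_eq (liftChLin_istarCo_mul I))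
    (contract_bot_mul_wedge_bot_deltaCh hσ)

theorem pstarCo_comp_astarCo (hI : I.Nonempty) {σ : Finset (VV n)} (hσ : ¬ coeIm I ⊆ σ) :
    liftCh (pstarCo I) (astarCo I σ) = 0 := by
  rw [liftCh_eq_liftChLin_mul, liftChLin_pstarCo, liftChLin_astarCo]
  exact apply_eq_zero_of_mul_eq_zero (stellarRelations hI).projection_comp_homotopy
    (one_sub_projContaining_deltaCh hσ)

end Statements

end Stellar

theorem stellar_welding_cochains_general (n : ℕ)
    (I : Finset (Fin (n + 1))) (hI : I.Nonempty) :
    -- (1) i^⋆ and p^⋆ are cochain maps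
    (∀ σ : Finset (VV n), IsDel σ →
      liftCh (dSubGen I) (istarCo I σ) = liftCh (istarCo I) (dDelGen σ))
    ∧ (∀ σ : Finset (VV n), IsSubd I σ →
      liftCh dDelGen (pstarCo I σ) = liftCh (pstarCo I) (dSubGen I σ))
    -- (2) p^⋆ ∘ i^⋆ = id on C^•(Δ^n)
    ∧ (∀ σ : Finset (VV n), IsDel σ →
      liftCh (pstarCo I) (istarCo I σ) = deltaCh σ)
    -- (3) d a^⋆ + a^⋆ d = 1 - i^⋆ p^⋆ on C^•(⋆_I Δ^n)
    ∧ (∀ σ : Finset (VV n), IsSubd I σ →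
      liftCh (dSubGen I) (astarCo I σ) + liftCh (astarCo I) (dSubGen I σ)
        = deltaCh σ - liftCh (istarCo I) (pstarCo I σ))
    -- (4) a^⋆ ∘ a^⋆ = 0
    ∧ (∀ σ : Finset (VV n), IsSubd I σ →
      liftCh (astarCo I) (astarCo I σ) = 0)
    -- (5) a^⋆ ∘ i^⋆ = 0
    ∧ (∀ σ : Finset (VV n), IsDel σ →
      liftCh (astarCo I) (istarCo I σ) = 0)
    -- (6) p^⋆ ∘ a^⋆ = 0
    ∧ (∀ σ : Finset (VV n), IsSubd I σ →
      liftCh (pstarCo I) (astarCo I σ) = 0) :=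
  ⟨fun _ hσ => Stellar.dSubGen_comp_istarCo hI hσ.2,
    fun _ hσ => Stellar.dDelGen_comp_pstarCo hI hσ.2,
    fun _ hσ => Stellar.pstarCo_comp_istarCo hI hσ.2,
    fun _ hσ => Stellar.astarCo_homotopy hI hσ.2,
    fun σ _ => Stellar.astarCo_comp_astarCo hI σ,
    fun _ hσ => Stellar.astarCo_comp_istarCo hI hσ.2,
    fun _ hσ => Stellar.pstarCo_comp_astarCo hI hσ.2⟩

/-- The stellar welding maps `(i^⋆, p^⋆, a^⋆)` form a special
deformation retraction of `C^•(⋆_I Δ^n)` onto `C^•(Δ^n)`. -/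
theorem stellar_welding_cochains (n : ℕ) (hn : 1 ≤ n)
    (I : Finset (Fin (n + 1))) (hI : I.Nonempty) :
    -- (1) i^⋆ and p^⋆ are cochain maps
    (∀ σ : Finset (VV n), IsDel σ →
      liftCh (dSubGen I) (istarCo I σ) = liftCh (istarCo I) (dDelGen σ))
    ∧ (∀ σ : Finset (VV n), IsSubd I σ →
      liftCh dDelGen (pstarCo I σ) = liftCh (pstarCo I) (dSubGen I σ))
    -- (2) p^⋆ ∘ i^⋆ = id on C^•(Δ^n)
    ∧ (∀ σ : Finset (VV n), IsDel σ →
      liftCh (pstarCo I) (istarCo I σ) = deltaCh σ)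
    -- (3) d a^⋆ + a^⋆ d = 1 - i^⋆ p^⋆ on C^•(⋆_I Δ^n)
    ∧ (∀ σ : Finset (VV n), IsSubd I σ →
      liftCh (dSubGen I) (astarCo I σ) + liftCh (astarCo I) (dSubGen I σ)
        = deltaCh σ - liftCh (istarCo I) (pstarCo I σ))
    -- (4) a^⋆ ∘ a^⋆ = 0
    ∧ (∀ σ : Finset (VV n), IsSubd I σ →
      liftCh (astarCo I) (astarCo I σ) = 0)
    -- (5) a^⋆ ∘ i^⋆ = 0
    ∧ (∀ σ : Finset (VV n), IsDel σ →
      liftCh (astarCo I) (istarCo I σ) = 0)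
    -- (6) p^⋆ ∘ a^⋆ = 0
    ∧ (∀ σ : Finset (VV n), IsSubd I σ →
      liftCh (pstarCo I) (astarCo I σ) = 0) :=
  stellar_welding_cochains_general n I hI
end
end

section
/- Let ⋆Δ^n = ⋆_{\{0,…,n\}}Δ^n be the full stellar subdivision of the n-simplex and, for each j ∈ {0,…,n}, let ι_j, π_j, α_j be the cochain maps obtained from the j-th sequence of elementary expansions followed by an elementary collapse, given explicitly by: ι_j : C^•(Δ^n) → C^•(⋆Δ^n) with ι_j(\widehat{[0,…,n]}) = (−1)^j \widehat{[⋆,0,…,ĵ,…,n]}, ι_j(\widehat{K}) = \widehat{K} + (−1)^b \widehat{[⋆]∪(K∖\{j\})} for every proper subset K ⊊ {0,…,n} containing j (where j is the b-th smallest element of K), and ι_j(\widehat{K}) = \widehat{K} for K not containing j; π_j : C^•(⋆Δ^n) → C^•(Δ^n) with π_j(\widehat{[⋆,0,…,l̂,…,n]}) = (−1)^l \widehat{[0,…,n]} for each l, π_j(\widehat{K}) = \widehat{K} for K ⊆ {0,…,n}, and π_j = 0 on duals of all other simplices containing ⋆; α_j : C^•(⋆Δ^n) → C^{•−1}(⋆Δ^n)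 with α_j(\widehat{\{⋆\}∪K}) = −(−1)^b \widehat{\{⋆\}∪(K∖\{j\})} for every K ⊊ {0,…,n} containing j (j the b-th smallest element of K), and α_j = 0 on all other dual basis elements. Then (1/(n+1)) Σ_{j=0}^n ι_j = i^⋆, π_j = p^⋆ for every j, and (1/(n+1)) Σ_{j=0}^n α_j = a^⋆, where (i^⋆, p^⋆, a^⋆) are the stellar welding cochain maps of ⋆Δ^n. -/
open scoped BigOperators Classical

noncomputable section

/-- The inclusion `ι_j` obtained from the `j`-th sequence of elementary
expansions followed by an elementary collapse (values on dual basis). -/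
def iotaGen {n : ℕ} (j : Fin (n + 1)) (σ : Finset (VV n)) : Ch n :=
  if σ = coeIm (Finset.univ : Finset (Fin (n + 1))) then
    ((-1 : ℝ) ^ (j : ℕ)) • deltaCh (insert ⊥ (σ.erase (j : VV n)))
  else if (j : VV n) ∈ σ then
    deltaCh σ + sgn σ (j : VV n) • deltaCh (insert ⊥ (σ.erase (j : VV n)))
  else deltaCh σ

/-- The projection `π_j` (values on dual basis); it does not depend on `j`. -/
def piGen {n : ℕ} (σ : Finset (VV n)) : Ch n :=
  if ⊥ ∈ σ then
    if h : (missing (Finset.univ : Finset (Fin (n + 1))) σ).card = 1 then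
      ((-1 : ℝ) ^
          (((missing (Finset.univ : Finset (Fin (n + 1))) σ).min'
              (Finset.card_pos.mp (by omega)) : Fin (n + 1)) : ℕ)) •
        deltaCh (coeIm (Finset.univ : Finset (Fin (n + 1))))
    else 0
  else deltaCh σ

/-- The homotopy `α_j` (values on dual basis). -/
def alphaGen {n : ℕ} (j : Fin (n + 1)) (σ : Finset (VV n)) : Ch n :=
  if ⊥ ∈ σ ∧ (j : VV n) ∈ σ ∧
      σ ≠ insert ⊥ (coeIm (Finset.univ : Finset (Fin (n + 1)))) then
    - sgn (σ.erase ⊥) (j : VV n) • deltaCh (σ.erase (j : VV n))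
  else 0


section StellarAux
variable {n : ℕ}

lemma coe_inj : Function.Injective (fun a : Fin (n+1) => (a : VV n)) :=
  fun _ _ h => WithBot.coe_injective h

lemma coeIm_eq (I : Finset (Fin (n+1))) :
    coeIm I = I.image (fun a : Fin (n+1) => (a : VV n)) := by
  unfold coeIm
  simp [Finset.image_image]
  ext u
  simp [Function.comp]

lemma sum_coeIm (F : Finset (Fin (n+1))) (g : VV n → Ch n) :
    ∑ v ∈ coeIm F, g v = ∑ j ∈ F, g (j : VV n) := by
  rw [coeIm_eq, Finset.sum_image (fun a _ b _ h => coe_inj h)]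

lemma mem_coeIm {I : Finset (Fin (n+1))} {v : VV n} :
    v ∈ coeIm I ↔ ∃ a ∈ I, (a : VV n) = v := by
  rw [coeIm_eq]; simp

lemma mem_coeIm_univ {v : VV n} :
    v ∈ coeIm (Finset.univ : Finset (Fin (n+1))) ↔ v ≠ ⊥ := by
  rw [mem_coeIm]
  induction v using WithBot.recBotCoe with
  | bot =>
    constructor
    · rintro ⟨a, -, h⟩; exact absurd h WithBot.coe_ne_bot
    · intro h; exact absurd rfl h
  | coe a =>
    constructor
    · intro _; exact WithBot.coe_ne_bot
    · intro _; exact ⟨a, Finset.mem_univ a, rfl⟩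

lemma bot_not_mem_coeIm_univ : (⊥ : VV n) ∉ coeIm (Finset.univ : Finset (Fin (n+1))) :=
  fun h => (mem_coeIm_univ.mp h) rfl

lemma subset_S {σ : Finset (VV n)} (h : ⊥ ∉ σ) :
    σ ⊆ coeIm (Finset.univ : Finset (Fin (n+1))) := by
  intro v hv; rw [mem_coeIm_univ]; rintro rfl; exact h hv

lemma idxIn_coe (m : Fin (n+1)) {σ : Finset (VV n)} (hb : ⊥ ∉ σ)
    (hall : ∀ a : Fin (n+1), a < m → (a : VV n) ∈ σ) :
    idxIn σ (m : VV n) = (m : ℕ) := by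
  unfold idxIn
  have h1 : σ.filter (fun u => u < (m : VV n))
      = coeIm (Finset.univ.filter (fun a : Fin (n+1) => a < m)) := by
    ext u
    rw [mem_coeIm]
    induction u using WithBot.recBotCoe with
    | bot =>
      simp only [Finset.mem_filter]
      constructor
      · rintro ⟨h, -⟩; exact absurd h hb
      · rintro ⟨b, -, hb'⟩; exact absurd hb' WithBot.coe_ne_bot
    | coe a =>
      simp only [Finset.mem_filter, Finset.mem_univ, true_and]
      constructor
      · rintro ⟨-, hlt⟩
        exact ⟨a, WithBot.coe_lt_coe.mp hlt, rfl⟩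
      · rintro ⟨b, hblt, hba⟩
        obtain rfl : b = a := WithBot.coe_injective hba
        exact ⟨hall _ hblt, WithBot.coe_lt_coe.mpr hblt⟩
  rw [h1, coeIm_eq, Finset.card_image_of_injective _ coe_inj, ← Fin.card_Iio m]
  congr 1; ext a; simp

lemma eq_coeIm_filter {σ : Finset (VV n)} (hb : ⊥ ∉ σ) :
    σ = coeIm (Finset.univ.filter (fun j : Fin (n+1) => (j : VV n) ∈ σ)) := by
  ext u
  rw [mem_coeIm]
  induction u using WithBot.recBotCoe with
  | bot =>
    constructor
    · intro h; exact absurd h hb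
    · rintro ⟨b, -, hb'⟩; exact absurd hb' WithBot.coe_ne_bot
  | coe a =>
    constructor
    · intro h; exact ⟨a, Finset.mem_filter.mpr ⟨Finset.mem_univ a, h⟩, rfl⟩
    · rintro ⟨b, hmem, hba⟩
      obtain rfl : b = a := WithBot.coe_injective hba
      exact (Finset.mem_filter.mp hmem).2

lemma sum_over {σ : Finset (VV n)} (hb : ⊥ ∉ σ) (g : VV n → Ch n) :
    ∑ v ∈ σ, g v
      = ∑ j ∈ Finset.univ.filter (fun j : Fin (n+1) => (j : VV n) ∈ σ), g (j : VV n) := by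
  conv_lhs => rw [eq_coeIm_filter hb]
  rw [sum_coeIm]

lemma insert_bot_erase {τ : Finset (VV n)} (hb : ⊥ ∈ τ) (v : VV n) (hv : v ≠ ⊥) :
    insert ⊥ ((τ.erase ⊥).erase v) = τ.erase v := by
  ext u
  by_cases hu : u = ⊥
  · subst hu
    simp [Finset.mem_erase, hb, Ne.symm hv]
  · simp only [Finset.mem_insert, Finset.mem_erase, hu, false_or]
    tauto

lemma part1 (σ : Finset (VV n)) (hσ : IsDel σ) :
    ((n + 1 : ℝ))⁻¹ • ∑ j : Fin (n + 1), iotaGen j σ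
      = istarCo (Finset.univ : Finset (Fin (n + 1))) σ := by
  obtain ⟨hne, hb⟩ := hσ
  by_cases hS : σ = coeIm (Finset.univ : Finset (Fin (n+1)))
  · subst hS
    have hsgn : ∀ j : Fin (n+1),
        sgn (coeIm (Finset.univ : Finset (Fin (n+1)))) (j : VV n) = (-1 : ℝ)^(j : ℕ) := by
      intro j
      rw [sgn, idxIn_coe j bot_not_mem_coeIm_univ
        (fun a _ => mem_coeIm.mpr ⟨a, Finset.mem_univ a, rfl⟩)]
    rw [istarCo, if_neg (by simp), zero_add, Finset.inter_self, sum_coeIm]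
    simp only [Finset.card_univ, Fintype.card_fin, Nat.cast_add, Nat.cast_one]
    congr 1
    apply Finset.sum_congr rfl
    intro j _
    rw [iotaGen, if_pos rfl, hsgn j]
  · have hns : ¬ coeIm (Finset.univ : Finset (Fin (n+1))) ⊆ σ :=
      fun hsub => hS (Finset.Subset.antisymm (subset_S hb) hsub)
    rw [istarCo, if_pos hns]
    have hinter : σ ∩ coeIm (Finset.univ : Finset (Fin (n+1))) = σ :=
      Finset.inter_eq_left.mpr (subset_S hb)
    rw [hinter]
    have hiota : ∀ j : Fin (n+1), iotaGen j σ =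
        deltaCh σ + (if (j : VV n) ∈ σ then
          sgn σ (j : VV n) • deltaCh (insert ⊥ (σ.erase (j : VV n))) else 0) := by
      intro j
      rw [iotaGen, if_neg hS]
      by_cases hj : (j : VV n) ∈ σ
      · rw [if_pos hj, if_pos hj]
      · rw [if_neg hj, if_neg hj, add_zero]
    rw [Finset.sum_congr rfl (fun j _ => hiota j), Finset.sum_add_distrib,
      Finset.sum_const, Finset.card_univ, Fintype.card_fin, smul_add]
    have hone : (n + 1 : ℝ) ≠ 0 := by positivity
    rw [sum_over hb]
    simp only [Finset.card_univ, Fintype.card_fin, Nat.cast_add, Nat.cast_one]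
    congr 1
    · rw [← Nat.cast_smul_eq_nsmul ℝ, smul_smul]
      push_cast
      rw [inv_mul_cancel₀ hone, one_smul]
    · rw [← Finset.sum_filter]

lemma part2 (τ : Finset (VV n)) (hτ : IsSubd (Finset.univ : Finset (Fin (n+1))) τ) :
    piGen τ = pstarCo (Finset.univ : Finset (Fin (n + 1))) τ := by
  by_cases hb : ⊥ ∈ τ
  · rw [piGen, if_pos hb, pstarCo, if_pos hb]
    by_cases h1 : (missing (Finset.univ : Finset (Fin (n+1))) τ).card = 1
    · rw [dif_pos h1, dif_pos h1]
      obtain ⟨m, hm⟩ := Finset.card_eq_one.mp h1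
      have hmiss : ∀ a : Fin (n+1), ((a : VV n) ∈ τ ↔ a ≠ m) := by
        intro a
        have := Finset.ext_iff.mp hm a
        simp only [missing, Finset.mem_filter, Finset.mem_univ, true_and,
          Finset.mem_singleton] at this
        tauto
      simp only [hm, Finset.min'_singleton]
      have hsgn : sgn (τ.erase ⊥) (m : VV n) = (-1 : ℝ)^(m : ℕ) := by
        rw [sgn, idxIn_coe m (Finset.notMem_erase _ _)]
        intro a ha
        rw [Finset.mem_erase]
        exact ⟨WithBot.coe_ne_bot, (hmiss a).mpr (ne_of_lt ha)⟩
      have hins : insert ((m : Fin (n+1)) : VV n) (τ.erase ⊥)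
          = coeIm (Finset.univ : Finset (Fin (n+1))) := by
        ext u
        rw [mem_coeIm]
        induction u using WithBot.recBotCoe with
        | bot =>
          simp only [Finset.mem_insert, Finset.mem_erase]
          constructor
          · rintro (h | ⟨h, -⟩)
            · exact absurd h.symm WithBot.coe_ne_bot
            · exact absurd rfl h
          · rintro ⟨b, -, hb'⟩; exact absurd hb' WithBot.coe_ne_bot
        | coe a =>
          simp only [Finset.mem_insert, Finset.mem_erase]
          constructor
          · intro _; exact ⟨a, Finset.mem_univ a, rfl⟩
          · intro _
            by_cases ham : a = m
            · left; rw [ham]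
            · right; exact ⟨WithBot.coe_ne_bot, (hmiss a).mpr ham⟩
      rw [hsgn, hins]
    · rw [dif_neg h1, dif_neg h1]
  · rw [piGen, if_neg hb, pstarCo, if_neg hb]

lemma part3 (τ : Finset (VV n)) (hτ : IsSubd (Finset.univ : Finset (Fin (n+1))) τ) :
    ((n + 1 : ℝ))⁻¹ • ∑ j : Fin (n + 1), alphaGen j τ
      = astarCo (Finset.univ : Finset (Fin (n + 1))) τ := by
  by_cases hb : ⊥ ∈ τ
  · have hneq : τ ≠ insert ⊥ (coeIm (Finset.univ : Finset (Fin (n+1)))) := by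
      rintro rfl
      exact hτ.2 (Finset.subset_insert _ _)
    rw [astarCo, if_pos hb]
    have hinter : τ.erase ⊥ ∩ coeIm (Finset.univ : Finset (Fin (n+1))) = τ.erase ⊥ :=
      Finset.inter_eq_left.mpr (subset_S (Finset.notMem_erase _ _))
    rw [hinter]
    have halpha : ∀ j : Fin (n+1), alphaGen j τ =
        (if (j : VV n) ∈ τ then
          (- sgn (τ.erase ⊥) (j : VV n)) • deltaCh (τ.erase (j : VV n)) else 0) := by
      intro j
      by_cases hj : (j : VV n) ∈ τ
      · rw [alphaGen, if_pos ⟨hb, hj, hneq⟩, if_pos hj]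
      · rw [alphaGen, if_neg (by tauto), if_neg hj]
    rw [Finset.sum_congr rfl (fun j _ => halpha j), ← Finset.sum_filter]
    have hfil : Finset.univ.filter (fun j : Fin (n+1) => (j : VV n) ∈ τ.erase ⊥)
        = Finset.univ.filter (fun j : Fin (n+1) => (j : VV n) ∈ τ) := by
      ext j
      simp only [Finset.mem_filter, Finset.mem_erase]
      have : ((j : VV n) ≠ ⊥) := WithBot.coe_ne_bot
      tauto
    rw [sum_over (Finset.notMem_erase (⊥ : VV n) τ), hfil]
    have hins : ∀ j : Fin (n+1), insert ⊥ ((τ.erase ⊥).erase ((j : VV n)))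
        = τ.erase ((j : VV n)) := fun j => insert_bot_erase hb _ WithBot.coe_ne_bot
    simp only [hins, Finset.card_univ, Fintype.card_fin, Nat.cast_add, Nat.cast_one,
      neg_smul, Finset.sum_neg_distrib, smul_neg]
  · have h0 : ∀ j : Fin (n+1), alphaGen j τ = 0 := by
      intro j
      rw [alphaGen, if_neg (by tauto)]
    rw [Finset.sum_congr rfl (fun j _ => h0 j), astarCo, if_neg hb]
    simp

end StellarAux

/-- The averages of the elementary expansion/collapse maps
`ι_j`, `π_j`, `α_j` recover the stellar welding maps of the full stellar
subdivision `⋆Δ^n` (the case `I = {0,…,n}`). -/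
theorem stellar_welding_from_collapses (n : ℕ) (hn : 1 ≤ n) :
    (∀ σ : Finset (VV n), IsDel σ →
      ((n + 1 : ℝ))⁻¹ • ∑ j : Fin (n + 1), iotaGen j σ
        = istarCo (Finset.univ : Finset (Fin (n + 1))) σ)
    ∧ (∀ j : Fin (n + 1), ∀ τ : Finset (VV n),
        IsSubd (Finset.univ : Finset (Fin (n + 1))) τ →
        piGen τ = pstarCo (Finset.univ : Finset (Fin (n + 1))) τ)
    ∧ (∀ τ : Finset (VV n), IsSubd (Finset.univ : Finset (Fin (n + 1))) τ →
        ((n + 1 : ℝ))⁻¹ • ∑ j : Fin (n + 1), alphaGen j τ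
          = astarCo (Finset.univ : Finset (Fin (n + 1))) τ) := by
  exact ⟨fun σ hσ => part1 σ hσ, fun j τ hτ => part2 τ hτ, fun τ hτ => part3 τ hτ⟩

end
end

section
/- Let Y be a finite abstract simplicial complex, σ a q-simplex of Y and σ' a (q−1)-face of σ such that σ is not a face of any other simplex of Y and σ' is a face of no simplex of Y other than σ' and σ, so that X := Y ∖ {σ, σ'} is a subcomplex. Write ∂σ = Σ_τ ε_τ τ with ε_τ = ±1, the sum over the (q−1)-faces τ of σ. Define i^↓ : C^•(X) → C^•(Y) by i^↓(\widehat{τ}) = \widehat{τ} − ε_{σ'}ε_τ \widehat{σ'} if τ is a (q−1)-face of σ other than σ', and i^↓(\widehat{τ}) = \widehat{τ} for all other simplices τ of X; p^↓ : C^•(Y) → C^•(X) by p^↓(\widehat{τ}) = \widehat{τ} for τ in X and p^↓(\widehat{σ}) = p^↓(\widehat{σ'}) = 0; and a^↓ : C^•(Y) → C^{•−1}(Y) by a^↓(\widehat{σ}) = ε_{σ'}\widehat{σ'} and a^↓ = 0 on all other dual basis elements. Then i^↓ and p^↓ are cochain maps, p^↓∘i^↓ = id, and d∘a^↓ + a^↓∘d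 = id − i^↓∘p^↓ (the elementary collapse deformation retraction on cochains). -/
open scoped BigOperators Classical

set_option linter.unusedSectionVars false
set_option linter.unusedVariables false

noncomputable section

variable {Vt : Type*} [LinearOrder Vt]

/-- (Ambient space of) simplicial chains/cochains of a finite complex on the
vertex type `Vt`, realized as functions on finsets. -/
abbrev ChA (Vt : Type*) := Finset Vt → ℝ

/-- The basis (co)chain corresponding to the simplex `σ`. -/
def deltaA (σ : Finset Vt) : ChA Vt := fun τ => if τ = σ then 1 else 0

/-- Linear extension over the simplices of the complex `Z` of a map given on
basis simplices. -/
def liftA (Z : Finset (Finset Vt)) (f : Finset Vt → ChA Vt) (x : ChA Vt) :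
    ChA Vt :=
  fun τ => ∑ σ ∈ Z, x σ * f σ τ

/-- Sign `(-1)^a`, `a` the index of `v` in the increasing enumeration of `σ`. -/
def sgnA (σ : Finset Vt) (v : Vt) : ℝ := (-1) ^ (σ.filter (fun u => u < v)).card

/-- The boundary of a basis simplex. -/
def bdryA (σ : Finset Vt) : ChA Vt := ∑ v ∈ σ, sgnA σ v • deltaA (σ.erase v)

/-- The coefficient `ε_τ` of the face `τ` in `∂σ` (for `τ` a codimension-one
face of `σ`). -/
def epsA (σ τ : Finset Vt) : ℝ := ∏ v ∈ σ \ τ, sgnA σ v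

/-- Coboundary for the complex `Z`, on dual basis cochains. -/
def dCoA (Z : Finset (Finset Vt)) (τ : Finset Vt) : ChA Vt :=
  ∑ ρ ∈ Z, if τ ⊆ ρ ∧ ρ.card = τ.card + 1 then epsA ρ τ • deltaA ρ else 0

/-- The elementary collapse inclusion `i^↓` on cochains (values on dual
basis): `τ̂ ↦ τ̂ - ε_{σ'} ε_τ σ̂'` for `τ` a codimension-one face of `σ` other
than `σ'`, identity elsewhere. -/
def iCoGen (σ σ' : Finset Vt) (τ : Finset Vt) : ChA Vt :=
  if τ ⊆ σ ∧ τ.card + 1 = σ.card ∧ τ ≠ σ' then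
    deltaA τ - (epsA σ σ' * epsA σ τ) • deltaA σ'
  else deltaA τ

/-- The elementary collapse projection `p^↓` on cochains. -/
def pCoGen (σ σ' : Finset Vt) (ρ : Finset Vt) : ChA Vt :=
  if ρ = σ ∨ ρ = σ' then 0 else deltaA ρ

/-- The elementary collapse homotopy `a^↓` on cochains. -/
def aCoGen (σ σ' : Finset Vt) (ρ : Finset Vt) : ChA Vt :=
  if ρ = σ then epsA σ σ' • deltaA σ' else 0

lemma liftA_delta (Z : Finset (Finset Vt)) (f : Finset Vt → ChA Vt) {ρ : Finset Vt}
    (h : ρ ∈ Z) : liftA Z f (deltaA ρ) = f ρ := by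
  funext α
  simp only [liftA, deltaA]
  rw [Finset.sum_eq_single_of_mem ρ h]
  · simp
  · intro b _ hne; simp [hne]

lemma liftA_zero (Z : Finset (Finset Vt)) (f : Finset Vt → ChA Vt) :
    liftA Z f (0 : ChA Vt) = 0 := by
  funext α; simp [liftA]

lemma liftA_smul (Z : Finset (Finset Vt)) (f : Finset Vt → ChA Vt) (c : ℝ) (x : ChA Vt) :
    liftA Z f (c • x) = c • liftA Z f x := by
  funext α
  simp only [liftA, Pi.smul_apply, smul_eq_mul, Finset.mul_sum]
  exact Finset.sum_congr rfl fun σ _ => by ring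

lemma liftA_sub (Z : Finset (Finset Vt)) (f : Finset Vt → ChA Vt) (x y : ChA Vt) :
    liftA Z f (x - y) = liftA Z f x - liftA Z f y := by
  funext α
  simp only [liftA, Pi.sub_apply, sub_mul, Finset.sum_sub_distrib]

lemma liftA_sum (Z : Finset (Finset Vt)) (f : Finset Vt → ChA Vt)
    {ι : Type*} (s : Finset ι) (g : ι → ChA Vt) :
    liftA Z f (∑ i ∈ s, g i) = ∑ i ∈ s, liftA Z f (g i) := by
  funext α
  simp only [liftA, Finset.sum_apply, Finset.sum_mul]
  exact Finset.sum_comm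

lemma epsA_sq (σ τ : Finset Vt) : epsA σ τ * epsA σ τ = 1 := by
  rw [epsA, ← Finset.prod_mul_distrib]
  apply Finset.prod_eq_one
  intro v _
  rw [sgnA, ← pow_add]
  exact Even.neg_one_pow ⟨_, rfl⟩

lemma epsA_erase {σ : Finset Vt} {v : Vt} (h : v ∈ σ) :
    epsA σ (σ.erase v) = sgnA σ v := by
  rw [epsA, Finset.sdiff_erase_self, Finset.prod_singleton]
  exact h


lemma sgn_erase_lt {σ : Finset Vt} {a b : Vt} (ha : a ∈ σ) (hlt : a < b) :
    sgnA (σ.erase a) b = - sgnA σ b := by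
  rw [sgnA, sgnA, Finset.filter_erase]
  have hmem : a ∈ σ.filter (fun u => u < b) := Finset.mem_filter.2 ⟨ha, hlt⟩
  have hpos : 0 < (σ.filter (fun u => u < b)).card := Finset.card_pos.2 ⟨a, hmem⟩
  rw [Finset.card_erase_of_mem hmem]
  obtain ⟨m, hm⟩ := Nat.exists_eq_succ_of_ne_zero hpos.ne'
  rw [hm]
  simp [pow_succ]

lemma sgn_erase_gt {σ : Finset Vt} {a b : Vt} (hlt : a < b) :
    sgnA (σ.erase b) a = sgnA σ a := by
  rw [sgnA, sgnA, Finset.filter_erase, Finset.erase_eq_of_notMem]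
  simp only [Finset.mem_filter, not_and]
  intro _
  exact not_lt.2 hlt.le

lemma sign_pair {σ : Finset Vt} {a b : Vt} (ha : a ∈ σ) (hb : b ∈ σ) (hlt : a < b) :
    sgnA σ a * sgnA (σ.erase a) b + sgnA σ b * sgnA (σ.erase b) a = 0 := by
  rw [sgn_erase_lt ha hlt, sgn_erase_gt hlt]
  ring


lemma d2_aux (Y : Finset (Finset Vt))
    (hYdown : ∀ σ ∈ Y, ∀ τ, τ ⊆ σ → τ.Nonempty → τ ∈ Y)
    {σ τ : Finset Vt} (hσY : σ ∈ Y) (hτ : τ.Nonempty) (hsub : τ ⊆ σ)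
    (hc : σ.card = τ.card + 2) {a b : Vt} (h2 : σ \ τ = {a, b}) (hlt : a < b) :
    ∑ μ ∈ Y, (if τ ⊆ μ ∧ μ.card = τ.card + 1 ∧ μ ⊆ σ then epsA σ μ * epsA μ τ else 0) = 0 := by
  have hab : a ≠ b := hlt.ne
  have haσ : a ∈ σ ∧ a ∉ τ := by
    have : a ∈ σ \ τ := by rw [h2]; simp
    exact ⟨(Finset.mem_sdiff.1 this).1, (Finset.mem_sdiff.1 this).2⟩
  have hbσ : b ∈ σ ∧ b ∉ τ := by
    have : b ∈ σ \ τ := by rw [h2]; simp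
    exact ⟨(Finset.mem_sdiff.1 this).1, (Finset.mem_sdiff.1 this).2⟩
  have hsub_a : τ ⊆ σ.erase a := fun x hx =>
    Finset.mem_erase.2 ⟨fun h => haσ.2 (h ▸ hx), hsub hx⟩
  have hsub_b : τ ⊆ σ.erase b := fun x hx =>
    Finset.mem_erase.2 ⟨fun h => hbσ.2 (h ▸ hx), hsub hx⟩
  have haY : σ.erase a ∈ Y :=
    hYdown σ hσY _ (Finset.erase_subset _ _) (hτ.mono hsub_a)
  have hbY : σ.erase b ∈ Y :=
    hYdown σ hσY _ (Finset.erase_subset _ _) (hτ.mono hsub_b)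
  have hca : (σ.erase a).card = τ.card + 1 := by
    rw [Finset.card_erase_of_mem haσ.1, hc]; omega
  have hcb : (σ.erase b).card = τ.card + 1 := by
    rw [Finset.card_erase_of_mem hbσ.1, hc]; omega
  have hfil : Y.filter (fun μ => τ ⊆ μ ∧ μ.card = τ.card + 1 ∧ μ ⊆ σ)
      = {σ.erase a, σ.erase b} := by
    ext μ
    simp only [Finset.mem_filter, Finset.mem_insert, Finset.mem_singleton]
    constructor
    · rintro ⟨hμY, hτμ, hcμ, hμσ⟩
      have hsd : (σ \ μ).card = 1 := by
        rw [Finset.card_sdiff_of_subset hμσ, hcμ, hc]; omega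
      obtain ⟨u, hu⟩ := Finset.card_eq_one.1 hsd
      have hμ : μ = σ.erase u := by
        have h1 : σ \ (σ \ μ) = μ := by
          rw [Finset.sdiff_sdiff_self_left]
          exact Finset.inter_eq_right.2 hμσ
        rw [hu] at h1
        rw [Finset.erase_eq, ← h1]
      have huab : u ∈ ({a, b} : Finset Vt) := by
        rw [← h2]
        have : u ∈ σ \ μ := by rw [hu]; simp
        exact Finset.sdiff_subset_sdiff le_rfl hτμ this
      rcases Finset.mem_insert.1 huab with h | h
      · left; rw [hμ, h]
      · right; rw [hμ, Finset.mem_singleton.1 h]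
    · rintro (rfl | rfl)
      · exact ⟨haY, hsub_a, hca, Finset.erase_subset _ _⟩
      · exact ⟨hbY, hsub_b, hcb, Finset.erase_subset _ _⟩
  rw [← Finset.sum_filter, hfil]
  have hne : σ.erase a ≠ σ.erase b := by
    intro h
    have hb2 : b ∈ σ.erase b := by
      rw [← h]; exact Finset.mem_erase.2 ⟨hab.symm, hbσ.1⟩
    exact (Finset.mem_erase.1 hb2).1 rfl
  rw [Finset.sum_pair hne]
  have hea : (σ.erase a) \ τ = {b} := by
    rw [Finset.erase_sdiff_comm, h2, Finset.erase_insert]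
    simp [hab]
  have heb : (σ.erase b) \ τ = {a} := by
    rw [Finset.erase_sdiff_comm, h2, Finset.pair_comm, Finset.erase_insert]
    simp [hab.symm]
  have e1 : epsA (σ.erase a) τ = sgnA (σ.erase a) b := by
    rw [epsA, hea, Finset.prod_singleton]
  have e2 : epsA (σ.erase b) τ = sgnA (σ.erase b) a := by
    rw [epsA, heb, Finset.prod_singleton]
  rw [epsA_erase haσ.1, epsA_erase hbσ.1, e1, e2]
  exact sign_pair haσ.1 hbσ.1 hlt

lemma d2_sum (Y : Finset (Finset Vt))
    (hYdown : ∀ σ ∈ Y, ∀ τ, τ ⊆ σ → τ.Nonempty → τ ∈ Y)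
    {σ τ : Finset Vt} (hσY : σ ∈ Y) (hτ : τ.Nonempty) (hsub : τ ⊆ σ)
    (hc : σ.card = τ.card + 2) :
    ∑ μ ∈ Y, (if τ ⊆ μ ∧ μ.card = τ.card + 1 ∧ μ ⊆ σ then epsA σ μ * epsA μ τ else 0) = 0 := by
  have hsd : (σ \ τ).card = 2 := by
    rw [Finset.card_sdiff_of_subset hsub, hc]; omega
  obtain ⟨a, b, hab, h2⟩ := Finset.card_eq_two.1 hsd
  rcases hab.lt_or_gt with h | h
  · exact d2_aux Y hYdown hσY hτ hsub hc h2 h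
  · rw [Finset.pair_comm] at h2
    exact d2_aux Y hYdown hσY hτ hsub hc h2 h


def icoef (σ σ' τ : Finset Vt) : ℝ :=
  if τ ⊆ σ ∧ τ.card + 1 = σ.card ∧ τ ≠ σ' then epsA σ σ' * epsA σ τ else 0

lemma iCoGen_eq (σ σ' τ : Finset Vt) :
    iCoGen σ σ' τ = deltaA τ - icoef σ σ' τ • deltaA σ' := by
  rw [iCoGen, icoef]; split_ifs with h <;> simp

lemma aCoGen_eq (σ σ' ρ : Finset Vt) :
    aCoGen σ σ' ρ = (if ρ = σ then epsA σ σ' else 0) • deltaA σ' := by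
  rw [aCoGen]; split_ifs with h <;> simp

lemma liftA_dCoA (Y Z : Finset (Finset Vt)) (hZ : Z ⊆ Y) (g : Finset Vt → ChA Vt)
    (τ : Finset Vt) :
    liftA Y g (dCoA Z τ)
      = ∑ μ ∈ Z, if τ ⊆ μ ∧ μ.card = τ.card + 1 then epsA μ τ • g μ else 0 := by
  rw [dCoA, liftA_sum]
  refine Finset.sum_congr rfl fun μ hμ => ?_
  by_cases h : τ ⊆ μ ∧ μ.card = τ.card + 1
  · rw [if_pos h, if_pos h, liftA_smul, liftA_delta _ _ (hZ hμ)]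
  · rw [if_neg h, if_neg h, liftA_zero]

lemma sum_split {β : Type*} [AddCommGroup β] (Y : Finset (Finset Vt)) {σ σ' : Finset Vt}
    (hσ : σ ∈ Y) (hσ'Y : σ' ∈ Y) (hne : σ' ≠ σ) (f : Finset Vt → β) :
    ∑ μ ∈ Y, f μ = (∑ μ ∈ (Y.erase σ).erase σ', f μ) + f σ' + f σ := by
  rw [← Finset.add_sum_erase _ _ hσ,
    ← Finset.add_sum_erase _ _ (Finset.mem_erase.2 ⟨hne, hσ'Y⟩)]
  abel

lemma dCoA_top (Y : Finset (Finset Vt)) {σ : Finset Vt}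
    (hmax : ∀ ρ ∈ Y, σ ⊆ ρ → ρ = σ) : dCoA Y σ = 0 := by
  rw [dCoA]
  apply Finset.sum_eq_zero
  intro ρ hρ
  rw [if_neg]
  rintro ⟨h1, h2⟩
  rw [hmax ρ hρ h1] at h2
  omega

lemma dCoA_free (Y : Finset (Finset Vt)) {σ σ' : Finset Vt}
    (hfree : ∀ ρ ∈ Y, σ' ⊆ ρ → ρ = σ' ∨ ρ = σ) (hσY : σ ∈ Y) (hσ'σ : σ' ⊆ σ)
    (hc : σ'.card + 1 = σ.card) :
    dCoA Y σ' = epsA σ σ' • deltaA σ := by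
  rw [dCoA, Finset.sum_eq_single_of_mem σ hσY]
  · rw [if_pos ⟨hσ'σ, hc.symm⟩]
  · intro ρ hρ hne
    rw [if_neg]
    rintro ⟨h1, h2⟩
    rcases hfree ρ hρ h1 with rfl | rfl
    · omega
    · exact hne rfl

lemma ite_smul0 (c : Prop) [Decidable c] (r : ℝ) (x : ChA Vt) :
    (if c then r • x else 0) = (if c then r else 0) • x := by
  split_ifs with h <;> simp


lemma claim1_key (Y : Finset (Finset Vt))
    (hYdown : ∀ σ ∈ Y, ∀ τ, τ ⊆ σ → τ.Nonempty → τ ∈ Y)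
    {σ σ' τ : Finset Vt} (hσY : σ ∈ Y) (hσ'Y : σ' ∈ Y) (hσ'σ : σ' ⊆ σ)
    (hccard : σ'.card + 1 = σ.card) (hneσ : σ' ≠ σ) (hτne : τ.Nonempty) :
    (∑ μ ∈ (Y.erase σ).erase σ', if τ ⊆ μ ∧ μ.card = τ.card + 1
        then epsA μ τ * icoef σ σ' μ else 0)
      = - (if τ ⊆ σ' ∧ σ'.card = τ.card + 1 then epsA σ' τ else 0) := by
  have hε : epsA σ σ' * epsA σ σ' = 1 := epsA_sq σ σ'
  have st1 : (∑ μ ∈ (Y.erase σ).erase σ',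
        if τ ⊆ μ ∧ μ.card = τ.card + 1 then epsA μ τ * icoef σ σ' μ else 0)
      = ∑ μ ∈ Y, (if τ ⊆ μ ∧ μ.card = τ.card + 1 ∧ μ ⊆ σ ∧ μ.card + 1 = σ.card ∧ μ ≠ σ'
          then epsA σ σ' * (epsA σ μ * epsA μ τ) else 0) := by
    rw [sum_split Y hσY hσ'Y hneσ]
    have fσ' : (if τ ⊆ σ' ∧ σ'.card = τ.card + 1 ∧ σ' ⊆ σ ∧ σ'.card + 1 = σ.card ∧ σ' ≠ σ'
        then epsA σ σ' * (epsA σ σ' * epsA σ' τ) else 0) = 0 := by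
      rw [if_neg]; tauto
    have fσ : (if τ ⊆ σ ∧ σ.card = τ.card + 1 ∧ σ ⊆ σ ∧ σ.card + 1 = σ.card ∧ σ ≠ σ'
        then epsA σ σ' * (epsA σ σ * epsA σ τ) else 0) = 0 := by
      rw [if_neg]; rintro ⟨-, -, -, h, -⟩; omega
    rw [fσ, fσ', add_zero, add_zero]
    apply Finset.sum_congr rfl
    intro μ _
    rw [icoef]
    by_cases h1 : τ ⊆ μ ∧ μ.card = τ.card + 1
    · rw [if_pos h1]
      by_cases h2 : μ ⊆ σ ∧ μ.card + 1 = σ.card ∧ μ ≠ σ'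
      · rw [if_pos h2, if_pos ⟨h1.1, h1.2, h2.1, h2.2.1, h2.2.2⟩]; ring
      · rw [if_neg h2, if_neg (by tauto), mul_zero]
    · rw [if_neg h1, if_neg (by tauto)]
  rw [st1]
  by_cases hcase : τ ⊆ σ ∧ σ.card = τ.card + 2
  · obtain ⟨hτσsub, hc2⟩ := hcase
    have st3 : ∀ μ ∈ Y,
        (if τ ⊆ μ ∧ μ.card = τ.card + 1 ∧ μ ⊆ σ ∧ μ.card + 1 = σ.card ∧ μ ≠ σ'
          then epsA σ σ' * (epsA σ μ * epsA μ τ) else 0)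
        = (epsA σ σ' * if τ ⊆ μ ∧ μ.card = τ.card + 1 ∧ μ ⊆ σ
              then epsA σ μ * epsA μ τ else 0)
          - (if μ = σ' ∧ (τ ⊆ μ ∧ μ.card = τ.card + 1 ∧ μ ⊆ σ)
              then epsA σ σ' * (epsA σ μ * epsA μ τ) else 0) := by
      intro μ _
      by_cases hc : τ ⊆ μ ∧ μ.card = τ.card + 1 ∧ μ ⊆ σ
      · by_cases he : μ = σ'
        · rw [if_neg (by tauto), if_pos hc, if_pos ⟨he, hc⟩]; ring
        · rw [if_pos ⟨hc.1, hc.2.1, hc.2.2, by omega, he⟩, if_pos hc,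
            if_neg (by tauto), sub_zero]
      · rw [if_neg (by tauto), if_neg hc, if_neg (by tauto), mul_zero, sub_zero]
    rw [Finset.sum_congr rfl st3, Finset.sum_sub_distrib, ← Finset.mul_sum,
      d2_sum Y hYdown hσY hτne hτσsub hc2, mul_zero, zero_sub]
    congr 1
    rw [Finset.sum_eq_single_of_mem σ' hσ'Y (fun b _ hb => if_neg (fun hc => hb hc.1))]
    by_cases hcσ' : τ ⊆ σ' ∧ σ'.card = τ.card + 1
    · rw [if_pos ⟨rfl, hcσ'.1, hcσ'.2, hσ'σ⟩, if_pos hcσ', ← mul_assoc, hε, one_mul]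
    · rw [if_neg (by tauto), if_neg hcσ']
  · rw [Finset.sum_eq_zero, if_neg, neg_zero]
    · rintro ⟨g1, g2⟩
      exact hcase ⟨g1.trans hσ'σ, by omega⟩
    · intro μ _
      rw [if_neg]
      rintro ⟨h1, h2, h3, h4, -⟩
      exact hcase ⟨h1.trans h3, by omega⟩

/-- The elementary collapse deformation retraction on
cochains. -/
theorem elementary_collapse_cochains
    (Y : Finset (Finset Vt))
    (hY : ∀ σ ∈ Y, σ.Nonempty)
    (hYdown : ∀ σ ∈ Y, ∀ τ, τ ⊆ σ → τ.Nonempty → τ ∈ Y)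
    (q : ℕ) (hq : 1 ≤ q)
    (σ σ' : Finset Vt) (hσY : σ ∈ Y) (hcard : σ.card = q + 1)
    (v' : Vt) (hv' : v' ∈ σ) (hσ' : σ' = σ.erase v')
    (hmax : ∀ ρ ∈ Y, σ ⊆ ρ → ρ = σ)
    (hfree : ∀ ρ ∈ Y, σ' ⊆ ρ → ρ = σ' ∨ ρ = σ) :
    -- i^↓ is a cochain map : d_Y ∘ i^↓ = i^↓ ∘ d_X on C^•(X)
    (∀ τ ∈ Y, τ ≠ σ → τ ≠ σ' →
      liftA Y (dCoA Y) (iCoGen σ σ' τ)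
        = liftA Y (iCoGen σ σ') (dCoA ((Y.erase σ).erase σ') τ))
    -- p^↓ is a cochain map : d_X ∘ p^↓ = p^↓ ∘ d_Y on C^•(Y)
    ∧ (∀ ρ ∈ Y,
      liftA Y (dCoA ((Y.erase σ).erase σ')) (pCoGen σ σ' ρ)
        = liftA Y (pCoGen σ σ') (dCoA Y ρ))
    -- p^↓ ∘ i^↓ = id on C^•(X)
    ∧ (∀ τ ∈ Y, τ ≠ σ → τ ≠ σ' →
      liftA Y (pCoGen σ σ') (iCoGen σ σ' τ) = deltaA τ)
    -- d a^↓ + a^↓ d = 1 - i^↓ p^↓ on C^•(Y)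
    ∧ (∀ ρ ∈ Y,
      liftA Y (dCoA Y) (aCoGen σ σ' ρ) + liftA Y (aCoGen σ σ') (dCoA Y ρ)
        = deltaA ρ - liftA Y (iCoGen σ σ') (pCoGen σ σ' ρ)) := by
  have hσ'σ : σ' ⊆ σ := by rw [hσ']; exact Finset.erase_subset _ _
  have hccard : σ'.card + 1 = σ.card := by
    rw [hσ', Finset.card_erase_of_mem hv']
    omega
  have hσ'ne : σ'.Nonempty := by
    apply Finset.card_pos.1
    omega
  have hσ'Y : σ' ∈ Y := hYdown σ hσY σ' hσ'σ hσ'ne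
  have hneσ : σ' ≠ σ := fun h => by rw [h] at hccard; omega
  have hε : epsA σ σ' * epsA σ σ' = 1 := epsA_sq σ σ'
  have hd0 : dCoA Y σ = 0 := dCoA_top Y hmax
  have hd1 : dCoA Y σ' = epsA σ σ' • deltaA σ := dCoA_free Y hfree hσY hσ'σ hccard
  have hXY : (Y.erase σ).erase σ' ⊆ Y :=
    (Finset.erase_subset _ _).trans (Finset.erase_subset _ _)
  refine ⟨?_, ?_, ?_, ?_⟩
  · -- i is a cochain map
    intro τ hτY hτσ hτσ'
    have hτne : τ.Nonempty := hY τ hτY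
    rw [iCoGen_eq, liftA_sub, liftA_smul, liftA_delta _ _ hτY, liftA_delta _ _ hσ'Y, hd1,
      liftA_dCoA Y _ hXY]
    have hterm : ∀ μ ∈ (Y.erase σ).erase σ',
        (if τ ⊆ μ ∧ μ.card = τ.card + 1 then epsA μ τ • iCoGen σ σ' μ else 0)
        = (if τ ⊆ μ ∧ μ.card = τ.card + 1 then epsA μ τ • deltaA μ else 0)
          - (if τ ⊆ μ ∧ μ.card = τ.card + 1 then epsA μ τ * icoef σ σ' μ else 0)
              • deltaA σ' := by
      intro μ _
      by_cases h : τ ⊆ μ ∧ μ.card = τ.card + 1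
      · rw [if_pos h, if_pos h, if_pos h, iCoGen_eq, smul_sub, smul_smul]
      · rw [if_neg h, if_neg h, if_neg h, zero_smul, sub_zero]
    rw [Finset.sum_congr rfl hterm, Finset.sum_sub_distrib, ← Finset.sum_smul,
      claim1_key Y hYdown hσY hσ'Y hσ'σ hccard hneσ hτne, dCoA,
      sum_split Y hσY hσ'Y hneσ]
    have E1 : icoef σ σ' τ • (epsA σ σ' • deltaA σ)
        = (if τ ⊆ σ ∧ σ.card = τ.card + 1 then epsA σ τ • deltaA σ else 0) := by
      rw [smul_smul, icoef]
      by_cases h : τ ⊆ σ ∧ τ.card + 1 = σ.card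
      · rw [if_pos ⟨h.1, h.2, hτσ'⟩, if_pos ⟨h.1, h.2.symm⟩]
        congr 1
        rw [mul_right_comm, hε, one_mul]
      · rw [if_neg (by tauto), if_neg (fun hc => h ⟨hc.1, hc.2.symm⟩), zero_mul, zero_smul]
    have E2 : (if τ ⊆ σ' ∧ σ'.card = τ.card + 1 then epsA σ' τ • deltaA σ' else 0)
        = (if τ ⊆ σ' ∧ σ'.card = τ.card + 1 then epsA σ' τ else 0) • deltaA σ' :=
      ite_smul0 _ _ _
    rw [E1, E2, neg_smul]
    abel
  · -- p is a cochain map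
    intro ρ hρ
    by_cases hρσ : ρ = σ
    · subst hρσ
      rw [pCoGen, if_pos (Or.inl rfl), liftA_zero, hd0, liftA_zero]
    · by_cases hρσ' : ρ = σ'
      · subst hρσ'
        rw [pCoGen, if_pos (Or.inr rfl), liftA_zero, hd1, liftA_smul,
          liftA_delta _ _ hσY]
        rw [pCoGen, if_pos (Or.inl rfl), smul_zero]
      · have p1 : pCoGen σ σ' ρ = deltaA ρ := by rw [pCoGen, if_neg (by tauto)]
        rw [p1, liftA_delta _ _ hρ, liftA_dCoA Y Y (le_refl _),
          sum_split Y hσY hσ'Y hneσ]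
        have gσ : (if ρ ⊆ σ ∧ σ.card = ρ.card + 1
            then epsA σ ρ • pCoGen σ σ' σ else 0) = 0 := by
          rw [pCoGen, if_pos (Or.inl rfl), smul_zero, ite_self]
        have gσ' : (if ρ ⊆ σ' ∧ σ'.card = ρ.card + 1
            then epsA σ' ρ • pCoGen σ σ' σ' else 0) = 0 := by
          rw [pCoGen, if_pos (Or.inr rfl), smul_zero, ite_self]
        rw [gσ, gσ', add_zero, add_zero, dCoA]
        apply Finset.sum_congr rfl
        intro μ hμ
        have h1 : μ ≠ σ' := (Finset.mem_erase.1 hμ).1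
        have h2 : μ ≠ σ := (Finset.mem_erase.1 (Finset.mem_erase.1 hμ).2).1
        have hpp : pCoGen σ σ' μ = deltaA μ := by rw [pCoGen, if_neg (by tauto)]
        rw [hpp]
  · -- p ∘ i = id
    intro τ hτ hτσ hτσ'
    rw [iCoGen_eq, liftA_sub, liftA_smul, liftA_delta _ _ hτ, liftA_delta _ _ hσ'Y]
    have p1 : pCoGen σ σ' τ = deltaA τ := by rw [pCoGen, if_neg (by tauto)]
    have p2 : pCoGen σ σ' σ' = 0 := by rw [pCoGen, if_pos (Or.inr rfl)]
    rw [p1, p2, smul_zero, sub_zero]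
  · -- homotopy
    intro ρ hρ
    rw [aCoGen_eq, liftA_smul, liftA_delta _ _ hσ'Y, hd1, liftA_dCoA Y Y (le_refl _)]
    have hsum : (∑ μ ∈ Y, if ρ ⊆ μ ∧ μ.card = ρ.card + 1
          then epsA μ ρ • aCoGen σ σ' μ else 0)
        = if ρ ⊆ σ ∧ σ.card = ρ.card + 1
            then epsA σ ρ • (epsA σ σ' • deltaA σ') else 0 := by
      rw [Finset.sum_eq_single_of_mem σ hσY]
      · rw [aCoGen, if_pos rfl]
      · intro b _ hb
        rw [aCoGen, if_neg hb, smul_zero, ite_self]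
    rw [hsum]
    by_cases hρσ : ρ = σ
    · have hp : pCoGen σ σ' σ = 0 := by rw [pCoGen, if_pos (Or.inl rfl)]
      rw [hρσ, if_pos rfl, if_neg (fun hc => absurd hc.2 (by omega)), hp, liftA_zero,
        sub_zero, add_zero, smul_smul, hε, one_smul]
    · by_cases hρσ' : ρ = σ'
      · have hp : pCoGen σ σ' σ' = 0 := by rw [pCoGen, if_pos (Or.inr rfl)]
        rw [hρσ', if_neg hneσ, if_pos ⟨hσ'σ, hccard.symm⟩, hp, liftA_zero, sub_zero,
          zero_smul, zero_add, smul_smul, hε, one_smul]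
      · have hp : pCoGen σ σ' ρ = deltaA ρ := by rw [pCoGen, if_neg (by tauto)]
        rw [if_neg hρσ, zero_smul, zero_add, hp, liftA_delta _ _ hρ, iCoGen_eq,
          sub_sub_cancel, icoef]
        by_cases h : ρ ⊆ σ ∧ ρ.card + 1 = σ.card
        · rw [if_pos ⟨h.1, h.2.symm⟩, if_pos ⟨h.1, h.2, hρσ'⟩, smul_smul, mul_comm]
        · rw [if_neg (fun hc => h ⟨hc.1, hc.2.symm⟩), if_neg (by tauto), zero_smul]

end
end

section
/- Let (C, d_C) and (D, d_D) be ℤ-graded cochain complexes of real vector spaces, W : C → D and R : D → C degree-0 cochain maps, and s : D → D a degree −1 linear map such that R∘W = id_C, d_D∘s + s∘d_D = id_D − W∘R, s∘s = 0, s∘W = 0 and R∘s = 0 (a special deformation retraction). For n ≥ 1 equip the n-fold graded tensor power D^{⊗n} with the differential d = Σ_{j=1}^n 1^{⊗(j−1)} ⊗ d_D ⊗ 1^{⊗(n−j)} (with the Koszul sign rule: a degree-r map f in a tensor factor acts by (1⊗f)(x⊗y) = (−1)^{r|x|} x⊗f(y)), and define s_0 = Σ_{j=1}^n 1^{⊗(j−1)}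 ⊗ s ⊗ (W∘R)^{⊗(n−j)}. Then (W^{⊗n}, R^{⊗n}, s_0) is a special deformation retraction of D^{⊗n} onto C^{⊗n}: R^{⊗n}∘W^{⊗n} = id, d∘s_0 + s_0∘d = id − W^{⊗n}∘R^{⊗n}, s_0∘s_0 = 0, s_0∘W^{⊗n} = 0 and R^{⊗n}∘s_0 = 0. -/
open scoped BigOperators TensorProduct

noncomputable section

/-- The parity (Koszul sign) operator of a ℤ-graded module: it multiplies the
degree-`i` component by `(-1)^i`. -/
def parityOp {D : Type*} [AddCommGroup D] [Module ℝ D]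
    (𝒟 : ℤ → Submodule ℝ D) [DirectSum.Decomposition 𝒟] : D →ₗ[ℝ] D :=
  (DirectSum.toModule ℝ ℤ D (fun i => ((-1 : ℝ) ^ i) • (𝒟 i).subtype)) ∘ₗ
    (DirectSum.decomposeLinearEquiv 𝒟).toLinearMap

/-- With the Koszul sign rule, `1^{⊗(j-1)} ⊗ f ⊗ g^{⊗(n-j)}` for an odd-degree
map `f` acts on the `n`-fold tensor power as `ε^{⊗(j-1)} ⊗ f ⊗ g^{⊗(n-j)}`,
where `ε` is the parity operator. -/
def oddSlot {D : Type*} [AddCommGroup D] [Module ℝ D]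
    (𝒟 : ℤ → Submodule ℝ D) [DirectSum.Decomposition 𝒟]
    (n : ℕ) (f g : D →ₗ[ℝ] D) (j : Fin n) :
    (PiTensorProduct ℝ fun _ : Fin n => D) →ₗ[ℝ]
      PiTensorProduct ℝ fun _ : Fin n => D :=
  PiTensorProduct.map (fun i =>
    if i < j then parityOp 𝒟 else if i = j then f else g)

/-- The differential on the `n`-fold graded tensor power,
`d = ∑_j 1^{⊗(j-1)} ⊗ d_D ⊗ 1^{⊗(n-j)}` with the Koszul sign rule. -/
def dTensor {D : Type*} [AddCommGroup D] [Module ℝ D]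
    (𝒟 : ℤ → Submodule ℝ D) [DirectSum.Decomposition 𝒟]
    (n : ℕ) (dD : D →ₗ[ℝ] D) :
    (PiTensorProduct ℝ fun _ : Fin n => D) →ₗ[ℝ]
      PiTensorProduct ℝ fun _ : Fin n => D :=
  ∑ j : Fin n, oddSlot 𝒟 n dD LinearMap.id j

/-- `s_0 = ∑_j 1^{⊗(j-1)} ⊗ s ⊗ (WR)^{⊗(n-j)}` with the Koszul sign rule. -/
def sTensor {D : Type*} [AddCommGroup D] [Module ℝ D]
    (𝒟 : ℤ → Submodule ℝ D) [DirectSum.Decomposition 𝒟]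
    (n : ℕ) (s WR : D →ₗ[ℝ] D) :
    (PiTensorProduct ℝ fun _ : Fin n => D) →ₗ[ℝ]
      PiTensorProduct ℝ fun _ : Fin n => D :=
  ∑ j : Fin n, oddSlot 𝒟 n s WR j

section Helpers

variable {D : Type*} [AddCommGroup D] [Module ℝ D]

lemma tmap_zero {M N : Type*} [AddCommGroup M] [Module ℝ M]
    [AddCommGroup N] [Module ℝ N]
    {n : ℕ} (f : Fin n → M →ₗ[ℝ] N) (j : Fin n) (h : f j = 0) :
    PiTensorProduct.map f = 0 := by
  apply PiTensorProduct.ext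
  ext x
  simp only [LinearMap.compMultilinearMap_apply, PiTensorProduct.map_tprod,
    LinearMap.zero_apply, MultilinearMap.zero_apply, LinearMap.zero_comp]
  exact (PiTensorProduct.tprod ℝ).map_coord_zero j (by simp [h])

lemma tmap_neg {n : ℕ} (f g : Fin n → D →ₗ[ℝ] D) (j : Fin n)
    (h : ∀ i, i ≠ j → f i = g i) (hj : f j = - g j) :
    PiTensorProduct.map f = - PiTensorProduct.map g := by
  apply PiTensorProduct.ext
  ext x
  simp only [LinearMap.compMultilinearMap_apply, PiTensorProduct.map_tprod,
    LinearMap.neg_apply, MultilinearMap.neg_apply]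
  have hfun : (fun i => f i (x i)) =
      Function.update (fun i => g i (x i)) j (-(g j (x j))) := by
    funext i
    by_cases hij : i = j
    · subst hij; simp [hj]
    · simp [Function.update_of_ne hij, h i hij]
  rw [hfun, MultilinearMap.map_update_neg, Function.update_eq_self]

lemma tmap_add {n : ℕ} (f g h : Fin n → D →ₗ[ℝ] D) (j : Fin n)
    (hg : ∀ i, i ≠ j → f i = g i) (hh : ∀ i, i ≠ j → f i = h i)
    (hj : f j = g j + h j) :
    PiTensorProduct.map f = PiTensorProduct.map g + PiTensorProduct.map h := by
  apply PiTensorProduct.ext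
  ext x
  simp only [LinearMap.compMultilinearMap_apply, PiTensorProduct.map_tprod,
    LinearMap.add_apply, MultilinearMap.add_apply]
  have hfun : (fun i => f i (x i)) =
      Function.update (fun i => g i (x i)) j (g j (x j) + h j (x j)) := by
    funext i
    by_cases hij : i = j
    · subst hij; simp [hj]
    · simp [Function.update_of_ne hij, hg i hij]
  rw [hfun, MultilinearMap.map_update_add, Function.update_eq_self]
  congr 1
  have : Function.update (fun i => g i (x i)) j (h j (x j)) = fun i => h i (x i) := by
    funext i
    by_cases hij : i = j
    · subst hij; simp
    · simp [Function.update_of_ne hij, ← hg i hij, hh i hij]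
  rw [this]

lemma tmap_sub {n : ℕ} (f g h : Fin n → D →ₗ[ℝ] D) (j : Fin n)
    (hg : ∀ i, i ≠ j → f i = g i) (hh : ∀ i, i ≠ j → f i = h i)
    (hj : f j = g j - h j) :
    PiTensorProduct.map f = PiTensorProduct.map g - PiTensorProduct.map h := by
  apply PiTensorProduct.ext
  ext x
  simp only [LinearMap.compMultilinearMap_apply, PiTensorProduct.map_tprod,
    LinearMap.sub_apply, MultilinearMap.sub_apply]
  have hfun : (fun i => f i (x i)) =
      Function.update (fun i => g i (x i)) j (g j (x j) - h j (x j)) := by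
    funext i
    by_cases hij : i = j
    · subst hij; simp [hj]
    · simp [Function.update_of_ne hij, hg i hij]
  rw [hfun, MultilinearMap.map_update_sub, Function.update_eq_self]
  congr 1
  have : Function.update (fun i => g i (x i)) j (h j (x j)) = fun i => h i (x i) := by
    funext i
    by_cases hij : i = j
    · subst hij; simp
    · simp [Function.update_of_ne hij, ← hg i hij, hh i hij]
  rw [this]

variable (𝒟 : ℤ → Submodule ℝ D) [DirectSum.Decomposition 𝒟]

lemma graded_ext (f g : D →ₗ[ℝ] D) (h : ∀ i : ℤ, ∀ x ∈ 𝒟 i, f x = g x) : f = g := by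
  classical
  ext x
  have hx := DirectSum.sum_support_decompose 𝒟 x
  conv_lhs => rw [← hx]
  conv_rhs => rw [← hx]
  rw [map_sum, map_sum]
  exact Finset.sum_congr rfl fun i _ => h i _ (SetLike.coe_mem _)

lemma parity_apply {i : ℤ} {x : D} (hx : x ∈ 𝒟 i) :
    parityOp 𝒟 x = ((-1 : ℝ) ^ i) • x := by
  unfold parityOp
  simp only [LinearMap.comp_apply, LinearEquiv.coe_coe,
    DirectSum.decomposeLinearEquiv_apply]
  rw [DirectSum.decompose_of_mem 𝒟 hx, ← DirectSum.lof_eq_of ℝ,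
    DirectSum.toModule_lof]
  simp

lemma parity_comm (h : D →ₗ[ℝ] D) (r : ℤ)
    (hh : ∀ i : ℤ, ∀ x ∈ 𝒟 i, h x ∈ 𝒟 (i + r)) :
    parityOp 𝒟 ∘ₗ h = ((-1 : ℝ) ^ r) • (h ∘ₗ parityOp 𝒟) := by
  apply graded_ext 𝒟
  intro i x hx
  simp only [LinearMap.comp_apply, LinearMap.smul_apply]
  rw [parity_apply 𝒟 (hh i x hx), parity_apply 𝒟 hx, map_smul, smul_smul,
    zpow_add₀ (by norm_num : (-1 : ℝ) ≠ 0), mul_comm]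

lemma parity_sq : parityOp 𝒟 ∘ₗ parityOp 𝒟 = LinearMap.id := by
  apply graded_ext 𝒟
  intro i x hx
  simp only [LinearMap.comp_apply, LinearMap.id_apply]
  rw [parity_apply 𝒟 hx, map_smul, parity_apply 𝒟 hx, smul_smul, ← mul_zpow]
  norm_num

lemma lsum_comp {ι M N P : Type*} [AddCommGroup M] [Module ℝ M]
    [AddCommGroup N] [Module ℝ N] [AddCommGroup P] [Module ℝ P] (t : Finset ι)
    (f : ι → (N →ₗ[ℝ] P)) (g : M →ₗ[ℝ] N) :
    (∑ j ∈ t, f j) ∘ₗ g = ∑ j ∈ t, f j ∘ₗ g := by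
  ext x; simp

lemma lcomp_sum {ι M N P : Type*} [AddCommGroup M] [Module ℝ M]
    [AddCommGroup N] [Module ℝ N] [AddCommGroup P] [Module ℝ P] (t : Finset ι)
    (f : ι → (M →ₗ[ℝ] N)) (g : N →ₗ[ℝ] P) :
    g ∘ₗ (∑ j ∈ t, f j) = ∑ j ∈ t, g ∘ₗ f j := by
  ext x; simp [map_sum]

/-- Off-diagonal cancellation. -/
lemma offdiag {n : ℕ} (a b g : D →ₗ[ℝ] D)
    (hεa : parityOp 𝒟 ∘ₗ a = -(a ∘ₗ parityOp 𝒟))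
    (hεb : parityOp 𝒟 ∘ₗ b = -(b ∘ₗ parityOp 𝒟))
    (hεg : parityOp 𝒟 ∘ₗ g = g ∘ₗ parityOp 𝒟)
    (hag : a ∘ₗ g = g ∘ₗ a)
    (j k : Fin n) (hjk : j ≠ k) :
    oddSlot 𝒟 n a LinearMap.id j ∘ₗ oddSlot 𝒟 n b g k
      + oddSlot 𝒟 n b g k ∘ₗ oddSlot 𝒟 n a LinearMap.id j = 0 := by
  unfold oddSlot
  rw [← PiTensorProduct.map_comp, ← PiTensorProduct.map_comp]
  rcases lt_or_gt_of_ne hjk with hlt | hgt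
  · -- j < k : sign at slot j
    rw [tmap_neg _ _ j ?off ?slot, neg_add_cancel]
    case slot =>
      simp only [lt_self_iff_false, if_false, eq_self_iff_true, if_true, hlt, if_pos]
      rw [hεa, neg_neg]
    case off =>
      intro i hi
      by_cases h1 : i < j
      · have h2 : i < k := h1.trans hlt
        simp [h1, h2]
      · have h3 : j < i := lt_of_le_of_ne (not_lt.mp h1) (Ne.symm hi)
        simp [h1, hi, h3.ne', h3.not_gt]
  · -- k < j : sign at slot k
    rw [tmap_neg _ _ k ?off ?slot, neg_add_cancel]
    case slot =>
      simp only [lt_self_iff_false, if_false, eq_self_iff_true, if_true, hgt, if_pos]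
      exact hεb
    case off =>
      intro i hi
      rcases lt_trichotomy i k with h1 | h1 | h1
      · have h2 : i < j := h1.trans hgt
        simp [h1, h2]
      · exact absurd h1 hi
      · by_cases h2 : i < j
        · simp [h1.not_gt, h1.ne', h2, hεg]
        · by_cases h3 : i = j
          · subst h3
            simp [h1.not_gt, h1.ne', hag]
          · simp [h1.not_gt, h1.ne', h2, h3]

/-- The partial products `id^{⊗m} ⊗ g^{⊗(n-m)}`. -/
def Qmap (n m : ℕ) (g : D →ₗ[ℝ] D) :
    (PiTensorProduct ℝ fun _ : Fin n => D) →ₗ[ℝ]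
      PiTensorProduct ℝ fun _ : Fin n => D :=
  PiTensorProduct.map (fun i : Fin n => if (i : ℕ) < m then LinearMap.id else g)

lemma Qmap_top (n : ℕ) (g : D →ₗ[ℝ] D) : Qmap n n g = LinearMap.id := by
  unfold Qmap
  rw [show (fun i : Fin n => if (i : ℕ) < n then LinearMap.id else g)
      = fun _ : Fin n => (LinearMap.id : D →ₗ[ℝ] D) from funext fun i => if_pos i.isLt,
    PiTensorProduct.map_id]

lemma Qmap_bot (n : ℕ) (g : D →ₗ[ℝ] D) :
    Qmap n 0 g = PiTensorProduct.map (fun _ : Fin n => g) := by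
  unfold Qmap
  congr 1

lemma Qmap_telescope (n : ℕ) (g : D →ₗ[ℝ] D) :
    ∑ j : Fin n, (Qmap n ((j : ℕ) + 1) g - Qmap n (j : ℕ) g)
      = LinearMap.id - PiTensorProduct.map (fun _ : Fin n => g) := by
  rw [Fin.sum_univ_eq_sum_range (fun m => Qmap n (m + 1) g - Qmap n m g) n,
    Finset.sum_range_sub (fun m => Qmap n m g), Qmap_top, Qmap_bot]

/-- Diagonal terms give a telescoping difference. -/
lemma diag {n : ℕ} (a b g : D →ₗ[ℝ] D)
    (hab : a ∘ₗ b + b ∘ₗ a = LinearMap.id - g) (j : Fin n) :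
    oddSlot 𝒟 n a LinearMap.id j ∘ₗ oddSlot 𝒟 n b g j
      + oddSlot 𝒟 n b g j ∘ₗ oddSlot 𝒟 n a LinearMap.id j
    = Qmap n ((j : ℕ) + 1) g - Qmap n (j : ℕ) g := by
  unfold oddSlot Qmap
  rw [← PiTensorProduct.map_comp, ← PiTensorProduct.map_comp]
  set u : Fin n → D →ₗ[ℝ] D := fun i =>
    if i < j then parityOp 𝒟 ∘ₗ parityOp 𝒟
    else if i = j then a ∘ₗ b + b ∘ₗ a else g with hu
  have hsplit : PiTensorProduct.map u
      = (PiTensorProduct.map fun i =>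
          (if i < j then parityOp 𝒟 else if i = j then a else LinearMap.id) ∘ₗ
            (if i < j then parityOp 𝒟 else if i = j then b else g))
        + (PiTensorProduct.map fun i =>
          (if i < j then parityOp 𝒟 else if i = j then b else g) ∘ₗ
            (if i < j then parityOp 𝒟 else if i = j then a else LinearMap.id)) := by
    apply tmap_add
    · intro i hi
      by_cases h1 : i < j
      · simp [hu, h1]
      · have h3 : j < i := lt_of_le_of_ne (not_lt.mp h1) (Ne.symm hi)
        simp [hu, h1, hi]
    · intro i hi
      by_cases h1 : i < j
      · simp [hu, h1]
      · have h3 : j < i := lt_of_le_of_ne (not_lt.mp h1) (Ne.symm hi)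
        simp [hu, h1, hi]
    · simp [hu]
  rw [← hsplit]
  apply tmap_sub
  · intro i hi
    by_cases h1 : i < j
    · have h2 : (i : ℕ) < (j : ℕ) + 1 := by
        have : (i : ℕ) < (j : ℕ) := h1
        omega
      simp [hu, h1, h2, parity_sq 𝒟]
    · have h3 : j < i := lt_of_le_of_ne (not_lt.mp h1) (Ne.symm hi)
      have h4 : ¬ ((i : ℕ) < (j : ℕ) + 1) := by
        have : (j : ℕ) < (i : ℕ) := h3
        omega
      simp [hu, h1, hi, h4]
  · intro i hi
    by_cases h1 : i < j
    · have h2 : (i : ℕ) < (j : ℕ) := h1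
      simp [hu, h1, h2, parity_sq 𝒟]
    · have h3 : j < i := lt_of_le_of_ne (not_lt.mp h1) (Ne.symm hi)
      have h4 : ¬ ((i : ℕ) < (j : ℕ)) := by
        have : (j : ℕ) < (i : ℕ) := h3
        omega
      simp [hu, h1, hi, h4]
  · simpa [hu] using hab

end Helpers

/-- The tensor power of a special deformation retraction is a
special deformation retraction. -/
theorem tensor_power_special_deformation_retraction
    (n : ℕ) (hn : 1 ≤ n)
    (C D : Type*) [AddCommGroup C] [Module ℝ C] [AddCommGroup D] [Module ℝ D]
    (𝒞 : ℤ → Submodule ℝ C) (𝒟 : ℤ → Submodule ℝ D)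
    [DirectSum.Decomposition 𝒞] [DirectSum.Decomposition 𝒟]
    (dC : C →ₗ[ℝ] C) (dD : D →ₗ[ℝ] D)
    (W : C →ₗ[ℝ] D) (R : D →ₗ[ℝ] C) (s : D →ₗ[ℝ] D)
    -- gradings
    (hdC : ∀ i : ℤ, ∀ x ∈ 𝒞 i, dC x ∈ 𝒞 (i + 1))
    (hdD : ∀ i : ℤ, ∀ x ∈ 𝒟 i, dD x ∈ 𝒟 (i + 1))
    (hW : ∀ i : ℤ, ∀ x ∈ 𝒞 i, W x ∈ 𝒟 i)
    (hR : ∀ i : ℤ, ∀ x ∈ 𝒟 i, R x ∈ 𝒞 i)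
    (hs : ∀ i : ℤ, ∀ x ∈ 𝒟 i, s x ∈ 𝒟 (i - 1))
    -- cochain complexes and cochain maps
    (hdC2 : dC ∘ₗ dC = 0) (hdD2 : dD ∘ₗ dD = 0)
    (hWd : dD ∘ₗ W = W ∘ₗ dC) (hRd : dC ∘ₗ R = R ∘ₗ dD)
    -- special deformation retraction data
    (hRW : R ∘ₗ W = LinearMap.id)
    (hHom : dD ∘ₗ s + s ∘ₗ dD = LinearMap.id - W ∘ₗ R)
    (hss : s ∘ₗ s = 0) (hsW : s ∘ₗ W = 0) (hRs : R ∘ₗ s = 0) :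
    -- (W^{⊗n}, R^{⊗n}, s_0) is a special deformation retraction
    (PiTensorProduct.map (fun _ : Fin n => R)
        ∘ₗ PiTensorProduct.map (fun _ : Fin n => W) = LinearMap.id)
    ∧ (dTensor 𝒟 n dD ∘ₗ sTensor 𝒟 n s (W ∘ₗ R)
        + sTensor 𝒟 n s (W ∘ₗ R) ∘ₗ dTensor 𝒟 n dD
      = LinearMap.id
        - PiTensorProduct.map (fun _ : Fin n => W)
            ∘ₗ PiTensorProduct.map (fun _ : Fin n => R))
    ∧ (sTensor 𝒟 n s (W ∘ₗ R) ∘ₗ sTensor 𝒟 n s (W ∘ₗ R) = 0)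
    ∧ (sTensor 𝒟 n s (W ∘ₗ R) ∘ₗ PiTensorProduct.map (fun _ : Fin n => W) = 0)
    ∧ (PiTensorProduct.map (fun _ : Fin n => R) ∘ₗ sTensor 𝒟 n s (W ∘ₗ R) = 0) := by
  classical
  have hεd : parityOp 𝒟 ∘ₗ dD = -(dD ∘ₗ parityOp 𝒟) := by
    have h := parity_comm 𝒟 dD 1 hdD
    rwa [zpow_one, neg_one_smul] at h
  have hεs : parityOp 𝒟 ∘ₗ s = -(s ∘ₗ parityOp 𝒟) := by
    have h := parity_comm 𝒟 s (-1)
      (fun i x hx => by simpa [sub_eq_add_neg] using hs i x hx)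
    rwa [show ((-1 : ℝ) ^ (-1 : ℤ)) = -1 by norm_num, neg_one_smul] at h
  have hεWR : parityOp 𝒟 ∘ₗ (W ∘ₗ R) = (W ∘ₗ R) ∘ₗ parityOp 𝒟 := by
    have h := parity_comm 𝒟 (W ∘ₗ R) 0
      (fun i x hx => by simpa using hW i _ (hR i x hx))
    rwa [zpow_zero, one_smul] at h
  have hdWR : dD ∘ₗ (W ∘ₗ R) = (W ∘ₗ R) ∘ₗ dD := by
    rw [← LinearMap.comp_assoc, hWd, LinearMap.comp_assoc, hRd,
      ← LinearMap.comp_assoc]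
  refine ⟨?_, ?_, ?_, ?_, ?_⟩
  · -- R^{⊗n} ∘ W^{⊗n} = id
    rw [← PiTensorProduct.map_comp,
      show (fun _ : Fin n => R ∘ₗ W) = fun _ : Fin n => (LinearMap.id : C →ₗ[ℝ] C)
        from funext fun _ => hRW, PiTensorProduct.map_id]
  · -- homotopy identity
    unfold dTensor sTensor
    rw [lsum_comp, lsum_comp]
    simp only [lcomp_sum]
    rw [Finset.sum_comm (s := Finset.univ) (t := Finset.univ)
      (f := fun k j => oddSlot 𝒟 n s (W ∘ₗ R) k ∘ₗ oddSlot 𝒟 n dD LinearMap.id j),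
      ← Finset.sum_add_distrib]
    have hterm : ∀ j : Fin n,
        (∑ k : Fin n, oddSlot 𝒟 n dD LinearMap.id j ∘ₗ oddSlot 𝒟 n s (W ∘ₗ R) k)
        + (∑ k : Fin n, oddSlot 𝒟 n s (W ∘ₗ R) k ∘ₗ oddSlot 𝒟 n dD LinearMap.id j)
        = Qmap n ((j : ℕ) + 1) (W ∘ₗ R) - Qmap n (j : ℕ) (W ∘ₗ R) := by
      intro j
      rw [← Finset.sum_add_distrib,
        Finset.sum_eq_single j
          (fun k _ hk =>
            offdiag 𝒟 dD s (W ∘ₗ R) hεd hεs hεWR hdWR j k (Ne.symm hk))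
          (by simp)]
      exact diag 𝒟 dD s (W ∘ₗ R) hHom j
    rw [Finset.sum_congr rfl (fun j _ => hterm j), Qmap_telescope,
      ← PiTensorProduct.map_comp]
  · -- s₀ ∘ s₀ = 0
    unfold sTensor
    rw [lsum_comp]
    refine Finset.sum_eq_zero fun j _ => ?_
    rw [lcomp_sum]
    refine Finset.sum_eq_zero fun k _ => ?_
    unfold oddSlot
    rw [← PiTensorProduct.map_comp]
    rcases lt_trichotomy j k with hjk | rfl | hkj
    · exact tmap_zero _ k
        (by simp [hjk.not_gt, hjk.ne', LinearMap.comp_assoc, hRs])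
    · exact tmap_zero _ j (by simp [hss])
    · exact tmap_zero _ j
        (by simp [hkj.not_gt, hkj.ne', ← LinearMap.comp_assoc, hsW])
  · -- s₀ ∘ W^{⊗n} = 0
    unfold sTensor
    rw [lsum_comp]
    refine Finset.sum_eq_zero fun j _ => ?_
    unfold oddSlot
    rw [← PiTensorProduct.map_comp]
    exact tmap_zero _ j (by simp [hsW])
  · -- R^{⊗n} ∘ s₀ = 0
    unfold sTensor
    rw [lcomp_sum]
    refine Finset.sum_eq_zero fun j _ => ?_
    unfold oddSlot
    rw [← PiTensorProduct.map_comp]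
    exact tmap_zero _ j (by simp [hRs])

end
end

section
/- Let n ≥ 1, p ≥ 1, and let ω be a smooth p-form on |Δ^n|. Then for every increasing tuple 0 ≤ i_0 < i_1 < … < i_p ≤ n, ∫_{[i_0,…,i_p]} ω = (−1)^p · (h^{i_{p−1}}∘⋯∘h^{i_0}(ω))(e_{i_p}), where the right-hand side is the 0-form h^{i_{p−1}}∘⋯∘h^{i_0}(ω) evaluated at the vertex e_{i_p}. -/
/-!
Splitting off the first parameter `s₀`, the parametrization `G` of `[v₀, …, v_p]` is
`(1 - s₀) v₀ + s₀ G'(s')` with `G'` that of the face `[v₁, …, v_p]`, so the simplex is the cone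
with apex `v₀` over that face. By Fubini and the substitution `s₀ = 1 - y`, integrating out `s₀`
is exactly the Dupont operator with apex `v₀` applied to `ω` and evaluated on `G'`, except that
the edge `∂G/∂s₀ = G' - v₀` points opposite to the cone direction `v₀ - G'`. Hence
`∫_{[v₀, …, v_p]} ω = -∫_{[v₁, …, v_p]} h^{v₀} ω`, and after `p` such steps integration over
the point `[v_p]` is evaluation there.
-/

open MeasureTheory
open scoped BigOperators

noncomputable section

/-- ℝ^{n+1} -/
abbrev Vec (n : ℕ) := Fin (n + 1) → ℝ

/-- standard basis vector e_i -/
def eVec (n : ℕ) (i : Fin (n + 1)) : Vec n := Pi.single i 1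

/-- Raw (not necessarily alternating) inhomogeneous forms: a family of
degree-`p` "forms" given as functions of a point and a `p`-tuple of vectors. -/
def MForm (n : ℕ) := (p : ℕ) → Vec n → (Fin p → Vec n) → ℝ

/-- Embed a raw `p`-form as an inhomogeneous form concentrated in degree `p`. -/
def ofDeg (n p : ℕ) (ω : Vec n → (Fin p → Vec n) → ℝ) : MForm n :=
  fun q t v => if h : q = p then ω t (fun i => v (Fin.cast h.symm i)) else 0

/-- Exterior derivative. -/
def exd (n : ℕ) (F : MForm n) : MForm n :=
  fun q => match q with
  | 0 => fun _ _ => 0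
  | (p + 1) => fun t v =>
      ∑ j : Fin (p + 1), (-1 : ℝ) ^ (j : ℕ) *
        fderiv ℝ (fun x => F p x (fun i => v (Fin.succAbove j i))) t (v j)

/-- The Dupont operator `h^i`. -/
def hOp (n : ℕ) (i : Fin (n + 1)) (F : MForm n) : MForm n :=
  fun p t v =>
    ∫ s in (0:ℝ)..1, (1 - s) ^ p *
      F (p + 1) ((1 - s) • t + s • eVec n i) (Fin.cons (eVec n i - t) v)

/-- Iterated Dupont operators `h^{i_k} ∘ ⋯ ∘ h^{i_0}`. -/
def hTuple (n : ℕ) {m : ℕ} (c : Fin m → Fin (n + 1)) (F : MForm n) : MForm n :=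
  (List.ofFn c).foldl (fun G i => hOp n i G) F

/-- The Whitney form ω_{c 0, …, c p}. -/
def whitney (n p : ℕ) (c : Fin (p + 1) → Fin (n + 1)) :
    Vec n → (Fin p → Vec n) → ℝ :=
  fun t v => ∑ l : Fin (p + 1), (-1 : ℝ) ^ (l : ℕ) * t (c l) *
    Matrix.det (Matrix.of fun a b : Fin p => v a (c (Fin.succAbove l b)))

/-- ω̄ = p! ω. -/
def whitneyBar (n p : ℕ) (c : Fin (p + 1) → Fin (n + 1)) :
    Vec n → (Fin p → Vec n) → ℝ :=
  fun t v => (Nat.factorial p : ℝ) * whitney n p c t v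

/-- Wedge of a homogeneous `k`-form with an inhomogeneous form. -/
def wedgeHom (n k : ℕ) (α : Vec n → (Fin k → Vec n) → ℝ) (G : MForm n) : MForm n :=
  fun q t v =>
    if h : k ≤ q then
      ((Nat.factorial k : ℝ) * (Nat.factorial (q - k) : ℝ))⁻¹ *
        ∑ σ : Equiv.Perm (Fin q), ((Equiv.Perm.sign σ : ℤ) : ℝ) *
          α t (fun i => v (σ (Fin.castLE h i))) *
          G (q - k) t (fun j => v (σ (Fin.cast (Nat.add_sub_cancel' h) (Fin.natAdd k j))))
    else 0

open scoped Classical in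
/-- The Dupont homotopy. -/
def sDup (n : ℕ) (F : MForm n) : MForm n :=
  fun q t v => - ∑ k ∈ Finset.range n,
    ∑ c ∈ Finset.univ.filter (fun c : Fin (k + 1) → Fin (n + 1) => StrictMono c),
      wedgeHom n k (whitneyBar n k c) (hTuple n c F) q t v

/-- The unit cube [0,1]^p. -/
def cubeSet (p : ℕ) : Set (Fin p → ℝ) := Set.univ.pi fun _ => Set.Icc (0:ℝ) 1

/-- Canonical parametrization of the simplex with vertices `verts`. -/
def GmapV (n p : ℕ) (verts : Fin (p + 1) → Vec n) : (Fin p → ℝ) → Vec n :=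
  fun s => ∑ l : Fin (p + 1),
    ((∏ b ∈ Finset.univ.filter (fun b : Fin p => (b : ℕ) < (l : ℕ)), s b) *
      (if h : (l : ℕ) < p then 1 - s ⟨l, h⟩ else 1)) • verts l

/-- Integral of a raw `p`-form over the simplex with vertices `verts`. -/
def simplexIntV (n p : ℕ) (verts : Fin (p + 1) → Vec n)
    (ω : Vec n → (Fin p → Vec n) → ℝ) : ℝ :=
  ∫ s in cubeSet p, ω (GmapV n p verts s)
      (fun a => fderiv ℝ (GmapV n p verts) s (Pi.single a 1))

/-- ∫_{[c 0, …, c p]} ω. -/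
def simplexInt (n p : ℕ) (c : Fin (p + 1) → Fin (n + 1))
    (ω : Vec n → (Fin p → Vec n) → ℝ) : ℝ :=
  simplexIntV n p (fun l => eVec n (c l)) ω

open scoped Classical in
/-- (WR)(ω) for a homogeneous raw p-form ω. -/
def WRhom (n p : ℕ) (ω : Vec n → (Fin p → Vec n) → ℝ) :
    Vec n → (Fin p → Vec n) → ℝ :=
  fun t v =>
    ∑ c ∈ Finset.univ.filter (fun c : Fin (p + 1) → Fin (n + 1) => StrictMono c),
      simplexInt n p c ω * whitneyBar n p c t v

open Set

lemma continuous_uncurry_multilinearMap {X ι : Type*} [TopologicalSpace X] [Fintype ι]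
    [DecidableEq ι] {m : ℕ} (f : X → MultilinearMap ℝ (fun _ : ι => Fin m → ℝ) ℝ)
    (hf : ∀ v, Continuous fun x => f x v) :
    Continuous fun y : X × (ι → Fin m → ℝ) => f y.1 y.2 := by
  have hexpand : ∀ x (v : ι → Fin m → ℝ),
      f x v = ∑ d : ι → Fin m, (∏ i, v i (d i)) * f x (fun i => Pi.single (d i) 1) := by
    intro x v
    conv_lhs => rw [funext fun i => pi_eq_sum_univ' (v i), (f x).map_sum]
    simp only [(f x).map_smul_univ, smul_eq_mul]
  rw [funext fun y : X × (ι → Fin m → ℝ) => hexpand y.1 y.2]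
  fun_prop

lemma GmapV_zero (n : ℕ) (verts : Fin 1 → Vec n) (s : Fin 0 → ℝ) :
    GmapV n 0 verts s = verts 0 := by
  simp [GmapV]

lemma GmapV_succ (n p : ℕ) (verts : Fin (p + 2) → Vec n) (s : Fin (p + 1) → ℝ) :
    GmapV n (p + 1) verts s
      = (1 - s 0) • verts 0 + s 0 • GmapV n p (fun l => verts l.succ) (Fin.tail s) := by
  rw [GmapV, Fin.sum_univ_succ, GmapV, Finset.smul_sum]
  congr 1
  · simp
  refine Finset.sum_congr rfl fun l _ => ?_
  rw [smul_smul]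
  congr 1
  have hprod : ∏ b ∈ Finset.univ.filter (fun b : Fin (p + 1) => (b : ℕ) < (l.succ : ℕ)), s b
      = s 0 * ∏ b ∈ Finset.univ.filter (fun b : Fin p => (b : ℕ) < l), Fin.tail s b := by
    rw [Finset.prod_filter, Finset.prod_filter, Fin.prod_univ_succ]
    simp [Fin.tail]
  rw [hprod]
  by_cases hl : (l : ℕ) < p
  · rw [dif_pos (by simpa using hl), dif_pos hl]
    simp [Fin.tail, mul_assoc]
  · rw [dif_neg (by simpa using hl), dif_neg hl, mul_assoc]

lemma continuous_GmapV (n p : ℕ) (verts : Fin (p + 1) → Vec n) :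
    Continuous (GmapV n p verts) := by
  unfold GmapV
  refine continuous_finsetSum _ fun l _ => ?_
  split_ifs <;> fun_prop

def gmapPartial (n : ℕ) : (p : ℕ) → (Fin (p + 1) → Vec n) → (Fin p → ℝ) → Fin p → Vec n
  | 0, _, _ => Fin.elim0
  | p + 1, verts, s =>
      Fin.cons (GmapV n p (fun l => verts l.succ) (Fin.tail s) - verts 0)
        (s 0 • gmapPartial n p (fun l => verts l.succ) (Fin.tail s))

lemma continuous_gmapPartial (n p : ℕ) (verts : Fin (p + 1) → Vec n) :
    Continuous (gmapPartial n p verts) := by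
  induction p with
  | zero => exact continuous_of_const fun _ _ => funext fun a => a.elim0
  | succ p ih =>
    have hG := continuous_GmapV n p (fun l => verts l.succ)
    have hD := ih (fun l => verts l.succ)
    exact .finCons (by fun_prop) (by fun_prop)

lemma hasFDerivAt_GmapV (n p : ℕ) (verts : Fin (p + 1) → Vec n) (s : Fin p → ℝ) :
    ∃ L : (Fin p → ℝ) →L[ℝ] Vec n, HasFDerivAt (GmapV n p verts) L s ∧
      ∀ a, L (Pi.single a 1) = gmapPartial n p verts s a := by
  induction p with
  | zero =>
    refine ⟨0, ?_, fun a => a.elim0⟩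
    simp only [funext (GmapV_zero n verts)]
    exact hasFDerivAt_const _ _
  | succ p ih =>
    obtain ⟨L, hL, hLa⟩ := ih (fun l => verts l.succ) (Fin.tail s)
    let x₀ : (Fin (p + 1) → ℝ) →L[ℝ] ℝ := ContinuousLinearMap.proj 0
    let tail : (Fin (p + 1) → ℝ) →L[ℝ] (Fin p → ℝ) :=
      ContinuousLinearMap.pi fun i => ContinuousLinearMap.proj i.succ
    have hx₀ : HasFDerivAt (fun x : Fin (p + 1) → ℝ => x 0) x₀ s := x₀.hasFDerivAt
    have htail : HasFDerivAt (fun x => GmapV n p (fun l => verts l.succ) (Fin.tail x))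
        (L.comp tail) s := hL.comp s tail.hasFDerivAt
    refine ⟨-x₀.smulRight (verts 0) +
      (s 0 • L.comp tail + x₀.smulRight (GmapV n p (fun l => verts l.succ) (Fin.tail s))),
      ?_, fun a => ?_⟩
    · simp only [funext (GmapV_succ n p verts)]
      exact (((hasFDerivAt_const 1 s).sub hx₀).smul (hasFDerivAt_const (verts 0) s)).add
        (hx₀.smul htail) |>.congr_fderiv (by ext; simp)
    · induction a using Fin.cases with
      | zero =>
        have h : tail (Pi.single 0 1) = 0 := by ext i; simp [tail]
        simp [x₀, h, gmapPartial]
        abel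
      | succ a =>
        have h : tail (Pi.single a.succ 1) = Pi.single a 1 := by
          ext i; simp [tail, Pi.single_apply]
        simp [x₀, h, hLa, gmapPartial]

lemma fderiv_GmapV_single (n p : ℕ) (verts : Fin (p + 1) → Vec n) (s : Fin p → ℝ)
    (a : Fin p) :
    fderiv ℝ (GmapV n p verts) s (Pi.single a 1) = gmapPartial n p verts s a := by
  obtain ⟨L, hL, hLa⟩ := hasFDerivAt_GmapV n p verts s
  rw [hL.fderiv, hLa]

def coneOp (n : ℕ) (x : Vec n) (p : ℕ) (ω : Vec n → (Fin (p + 1) → Vec n) → ℝ) :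
    Vec n → (Fin p → Vec n) → ℝ :=
  fun t v => ∫ s in (0:ℝ)..1, (1 - s) ^ p * ω ((1 - s) • t + s • x) (Fin.cons (x - t) v)

lemma hOp_ofDeg (n : ℕ) (i : Fin (n + 1)) (p : ℕ) (ω : Vec n → (Fin (p + 1) → Vec n) → ℝ) :
    hOp n i (ofDeg n (p + 1) ω) = ofDeg n p (coneOp n (eVec n i) p ω) := by
  funext q t v
  rcases eq_or_ne q p with rfl | hq
  · simp [hOp, coneOp, ofDeg]
  · simp [hOp, ofDeg, hq]

lemma hTuple_succ (n m : ℕ) (c : Fin (m + 1) → Fin (n + 1)) (F : MForm n) :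
    hTuple n c F = hTuple n (Fin.tail c) (hOp n (c 0) F) := by
  rw [hTuple, hTuple, List.ofFn_succ]
  rfl

lemma continuous_coneOp (n : ℕ) (x : Vec n) (p : ℕ) (ω : Vec n → (Fin (p + 1) → Vec n) → ℝ)
    (hω : Continuous fun y : Vec n × (Fin (p + 1) → Vec n) => ω y.1 y.2) :
    Continuous fun y : Vec n × (Fin p → Vec n) => coneOp n x p ω y.1 y.2 := by
  have hseg : Continuous fun z : (Vec n × (Fin p → Vec n)) × ℝ =>
      ω ((1 - z.2) • z.1.1 + z.2 • x) (Fin.cons (x - z.1.1) z.1.2) :=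
    hω.comp (f := fun z : (Vec n × (Fin p → Vec n)) × ℝ =>
      ((1 - z.2) • z.1.1 + z.2 • x, (Fin.cons (x - z.1.1) z.1.2 : Fin (p + 1) → Vec n)))
      (by fun_prop)
  exact intervalIntegral.continuous_parametric_intervalIntegral_of_continuous
    ((by fun_prop : Continuous fun z : (Vec n × (Fin p → Vec n)) × ℝ => (1 - z.2) ^ p).mul hseg)
    continuous_const

lemma coneOp_smul (n : ℕ) (x : Vec n) (p : ℕ) (ω : Vec n → (Fin (p + 1) → Vec n) → ℝ)
    (hω : ∀ t (a : Fin (p + 1) → ℝ) v, ω t (fun j => a j • v j) = (∏ j, a j) * ω t v)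
    (t : Vec n) (a : Fin p → ℝ) (v : Fin p → Vec n) :
    coneOp n x p ω t (fun j => a j • v j) = (∏ j, a j) * coneOp n x p ω t v := by
  rw [coneOp, coneOp, ← intervalIntegral.integral_const_mul]
  refine intervalIntegral.integral_congr fun s _ => ?_
  have h : (Fin.cons (x - t) (fun j => a j • v j) : Fin (p + 1) → Vec n)
      = fun j => (Fin.cons 1 a : Fin (p + 1) → ℝ) j •
          (Fin.cons (x - t) v : Fin (p + 1) → Vec n) j := by
    ext j : 1
    induction j using Fin.cases <;> simp
  simp only [h, hω, Fin.prod_cons]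
  ring

lemma simplexIntV_eq (n p : ℕ) (verts : Fin (p + 1) → Vec n)
    (ω : Vec n → (Fin p → Vec n) → ℝ) :
    simplexIntV n p verts ω
      = ∫ s in cubeSet p, ω (GmapV n p verts s) (gmapPartial n p verts s) := by
  simp only [simplexIntV, fderiv_GmapV_single]

lemma simplexIntV_zero (n : ℕ) (verts : Fin 1 → Vec n) (ω : Vec n → (Fin 0 → Vec n) → ℝ) :
    simplexIntV n 0 verts ω = ω (verts 0) (fun i => i.elim0) := by
  have hcube : cubeSet 0 = univ := by ext; simp [cubeSet]
  simp [simplexIntV_eq, GmapV_zero, hcube, volume_pi, measureReal_def,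
    Subsingleton.elim (gmapPartial n 0 verts _) (fun i => i.elim0)]

lemma setIntegral_cubeSet_succ (p : ℕ) (f : (Fin (p + 1) → ℝ) → ℝ) (hf : Continuous f) :
    ∫ s in cubeSet (p + 1), f s = ∫ s in cubeSet p, ∫ x in Icc (0:ℝ) 1, f (Fin.cons x s) := by
  let e := MeasurableEquiv.piFinSuccAbove (fun _ : Fin (p + 1) => ℝ) 0
  have he : ∀ s, e s = (s 0, Fin.tail s) := fun s => rfl
  have hpre : e ⁻¹' (Icc 0 1 ×ˢ cubeSet p) = cubeSet (p + 1) := by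
    ext s
    simp only [mem_preimage, he, mem_prod, cubeSet, mem_pi, mem_univ, true_implies,
      Fin.forall_fin_succ (P := fun i => s i ∈ Icc 0 1), Fin.tail]
  have hintegrable : IntegrableOn (fun y : (Fin p → ℝ) × ℝ => f (Fin.cons y.2 y.1))
      (cubeSet p ×ˢ Icc 0 1) (volume.prod volume) :=
    (Continuous.continuousOn (by fun_prop)).integrableOn_compact
      ((isCompact_univ_pi fun _ => isCompact_Icc).prod isCompact_Icc)
  calc ∫ s in cubeSet (p + 1), f s
      = ∫ y in Icc 0 1 ×ˢ cubeSet p, f (Fin.cons y.1 y.2) ∂(volume.prod volume) := by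
        rw [← Measure.volume_eq_prod, ← hpre, ← (volume_preserving_piFinSuccAbove (fun _ => ℝ)
          0).setIntegral_preimage_emb e.measurableEmbedding]
        congr with s
        exact congrArg f (Fin.cons_self_tail s).symm
    _ = ∫ y in cubeSet p ×ˢ Icc 0 1, f (Fin.cons y.2 y.1) ∂(volume.prod volume) :=
        (setIntegral_prod_swap _ _ _).symm
    _ = _ := setIntegral_prod _ hintegrable

section ConeStep

variable {n p : ℕ} {ω : Vec n → (Fin (p + 1) → Vec n) → ℝ}

lemma pullback_cons_one_sub
    (hω : ∀ t (a : Fin (p + 1) → ℝ) v, ω t (fun j => a j • v j) = (∏ j, a j) * ω t v)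
    (verts : Fin (p + 2) → Vec n) (y : ℝ) (s : Fin p → ℝ) :
    ω (GmapV n (p + 1) verts (Fin.cons (1 - y) s))
        (gmapPartial n (p + 1) verts (Fin.cons (1 - y) s))
      = -((1 - y) ^ p * ω ((1 - y) • GmapV n p (fun l => verts l.succ) s + y • verts 0)
          (Fin.cons (verts 0 - GmapV n p (fun l => verts l.succ) s)
            (gmapPartial n p (fun l => verts l.succ) s))) := by
  set G := GmapV n p (fun l => verts l.succ) s
  set D := gmapPartial n p (fun l => verts l.succ) s
  have hpoint : GmapV n (p + 1) verts (Fin.cons (1 - y) s) = (1 - y) • G + y • verts 0 := by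
    rw [GmapV_succ, Fin.cons_zero, Fin.tail_cons, sub_sub_cancel, add_comm]
  have hpartial : gmapPartial n (p + 1) verts (Fin.cons (1 - y) s)
      = fun j => (Fin.cons (-1) (fun _ => 1 - y) : Fin (p + 1) → ℝ) j •
          (Fin.cons (verts 0 - G) D : Fin (p + 1) → Vec n) j := by
    ext j : 1
    induction j using Fin.cases <;> simp [gmapPartial, G, D]
  rw [hpoint, hpartial, hω, Fin.prod_cons, Finset.prod_const, Finset.card_univ,
    Fintype.card_fin]
  ring

lemma integral_Icc_pullback_cons
    (hω : ∀ t (a : Fin (p + 1) → ℝ) v, ω t (fun j => a j • v j) = (∏ j, a j) * ω t v)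
    (verts : Fin (p + 2) → Vec n) (s : Fin p → ℝ) :
    ∫ x in Icc (0:ℝ) 1,
        ω (GmapV n (p + 1) verts (Fin.cons x s)) (gmapPartial n (p + 1) verts (Fin.cons x s))
      = -coneOp n (verts 0) p ω (GmapV n p (fun l => verts l.succ) s)
          (gmapPartial n p (fun l => verts l.succ) s) := by
  rw [integral_Icc_eq_integral_Ioc, ← intervalIntegral.integral_of_le zero_le_one]
  have hflip := intervalIntegral.integral_comp_sub_left (a := 0) (b := 1) (fun x =>
    ω (GmapV n (p + 1) verts (Fin.cons x s)) (gmapPartial n (p + 1) verts (Fin.cons x s))) 1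
  rw [sub_self, sub_zero] at hflip
  rw [← hflip, coneOp, ← intervalIntegral.integral_neg]
  simp only [pullback_cons_one_sub hω]

theorem simplexIntV_succ
    (hcont : Continuous fun y : Vec n × (Fin (p + 1) → Vec n) => ω y.1 y.2)
    (hω : ∀ t (a : Fin (p + 1) → ℝ) v, ω t (fun j => a j • v j) = (∏ j, a j) * ω t v)
    (verts : Fin (p + 2) → Vec n) :
    simplexIntV n (p + 1) verts ω
      = -simplexIntV n p (fun l => verts l.succ) (coneOp n (verts 0) p ω) := by
  have hf : Continuous fun s => ω (GmapV n (p + 1) verts s) (gmapPartial n (p + 1) verts s) :=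
    hcont.comp ((continuous_GmapV n _ verts).prodMk (continuous_gmapPartial n _ verts))
  rw [simplexIntV_eq, setIntegral_cubeSet_succ _ _ hf, simplexIntV_eq, ← integral_neg]
  simp only [integral_Icc_pullback_cons hω]

end ConeStep

theorem simplexInt_eq_hTuple (n p : ℕ) (ω : Vec n → (Fin p → Vec n) → ℝ)
    (hcont : Continuous fun y : Vec n × (Fin p → Vec n) => ω y.1 y.2)
    (hω : ∀ t (a : Fin p → ℝ) v, ω t (fun j => a j • v j) = (∏ j, a j) * ω t v)
    (c : Fin (p + 1) → Fin (n + 1)) :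
    simplexInt n p c ω = (-1 : ℝ) ^ p *
      hTuple n (fun a : Fin p => c a.castSucc) (ofDeg n p ω) 0
        (eVec n (c (Fin.last p))) (fun i => i.elim0) := by
  induction p with
  | zero => simp [simplexInt, simplexIntV_zero, hTuple, ofDeg]
  | succ p ih =>
    rw [simplexInt, simplexIntV_succ hcont hω, hTuple_succ, hOp_ofDeg]
    have := ih (coneOp n (eVec n (c 0)) p ω) (continuous_coneOp n _ p ω hcont)
      (coneOp_smul n _ p ω hω) (fun l => c l.succ)
    simp only [simplexInt, Fin.succ_castSucc, Fin.succ_last] at this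
    rw [this, pow_succ, mul_neg_one, neg_mul]
    rfl

theorem simplex_integral_eq_iterated_h_general (n : ℕ) (q : ℕ)
    (ω : Vec n → AlternatingMap ℝ (Vec n) ℝ (Fin (q + 1)))
    (hω : ∀ v : Fin (q + 1) → Vec n, ContDiff ℝ (⊤ : ℕ∞) (fun t => ω t v))
    (c : Fin (q + 2) → Fin (n + 1)) :
    simplexInt n (q + 1) c (fun t v => ω t v)
      = (-1 : ℝ) ^ (q + 1) *
        hTuple n (fun a : Fin (q + 1) => c a.castSucc)
          (ofDeg n (q + 1) (fun t v => ω t v)) 0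
          (eVec n (c (Fin.last (q + 1)))) (fun i => i.elim0) := by
  refine simplexInt_eq_hTuple n (q + 1) _ ?_ (fun t a v => (ω t).map_smul_univ a v) c
  exact continuous_uncurry_multilinearMap (fun t => (ω t).toMultilinearMap)
    fun v => (hω v).continuous

/-- `∫_{[i_0,…,i_p]} ω = (-1)^p · (h^{i_{p-1}} ∘ ⋯ ∘ h^{i_0} ω)(e_{i_p})`. -/
theorem simplex_integral_eq_iterated_h (n : ℕ) (hn : 1 ≤ n) (q : ℕ)
    (ω : Vec n → AlternatingMap ℝ (Vec n) ℝ (Fin (q + 1)))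
    (hω : ∀ v : Fin (q + 1) → Vec n, ContDiff ℝ (⊤ : ℕ∞) (fun t => ω t v))
    (c : Fin (q + 2) → Fin (n + 1)) (hc : StrictMono c) :
    simplexInt n (q + 1) c (fun t v => ω t v)
      = (-1 : ℝ) ^ (q + 1) *
        hTuple n (fun a : Fin (q + 1) => c a.castSucc)
          (ofDeg n (q + 1) (fun t v => ω t v)) 0
          (eVec n (c (Fin.last (q + 1)))) (fun i => i.elim0) :=
  simplex_integral_eq_iterated_h_general n q ω hω c
end
end

section
/- Let k be a natural number and let g : [0,1] → ℝ be a continuous function such that w ↦ g(w)/w is integrable on (0,1]. Then ∫_0^1 ∫_0^1 s^k · (g(s·s')/s') ds ds' = (1/(k+1)) · ( ∫_0^1 g(w)/w dw − ∫_0^1 w^k g(w) dw ). -/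
/-!
Substituting `w = s s'` turns the inner integral into `∫_0^s g(w)/w dw`. Exchanging the order of
integration over the triangle `0 < w ≤ s ≤ 1` (Fubini, since `s^k · g(w)/w` is integrable
on the square) leaves `∫_0^1 g(w)/w · (1 - w^(k+1))/(k+1) dw`, which splits into the two
integrals on the right.
-/

open MeasureTheory Set

theorem setIntegral_Ioc_comp_mul_div (f : ℝ → ℝ) {s : ℝ} (hs : 0 < s) :
    ∫ t in Ioc 0 1, f (s * t) / t = ∫ w in Ioc 0 s, f w / w := by
  rw [← intervalIntegral.integral_of_le zero_le_one, ← intervalIntegral.integral_of_le hs.le]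
  calc ∫ t in (0:ℝ)..1, f (s * t) / t
      = s * ∫ t in (0:ℝ)..1, f (s * t) / (s * t) := by
        rw [← intervalIntegral.integral_const_mul]
        refine intervalIntegral.integral_congr fun t _ => ?_
        rw [mul_div_assoc', mul_div_mul_left _ _ hs.ne']
    _ = ∫ w in (0:ℝ)..s, f w / w := by
        rw [intervalIntegral.integral_comp_mul_left (fun w => f w / w) hs.ne', mul_zero, mul_one,
          smul_eq_mul, mul_inv_cancel_left₀ hs.ne']

theorem setIntegral_mul_setIntegral_Ioc_swap {μ : Measure ℝ} [SFinite μ] {a b : ℝ} {f h : ℝ → ℝ}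
    (hf : IntegrableOn f (Ioc a b) μ) (hh : IntegrableOn h (Ioc a b) μ) :
    ∫ s in Ioc a b, f s * ∫ w in Ioc a s, h w ∂μ ∂μ
      = ∫ w in Ioc a b, h w * ∫ s in Icc w b, f s ∂μ ∂μ := by
  set F : ℝ → ℝ → ℝ := fun s w => (Iic s).indicator (fun w => f s * h w) w
  have hF : Integrable (Function.uncurry F) ((μ.restrict (Ioc a b)).prod (μ.restrict (Ioc a b))) :=
    (hf.mul_prod hh).indicator (measurableSet_le measurable_snd measurable_fst)
  have hs : ∀ s ∈ Ioc a b, f s * ∫ w in Ioc a s, h w ∂μ = ∫ w in Ioc a b, F s w ∂μ := by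
    intro s hs
    rw [integral_indicator measurableSet_Iic, Measure.restrict_restrict measurableSet_Iic,
      Iic_inter_Ioc_of_le hs.2, integral_const_mul]
  have hw : ∀ w ∈ Ioc a b, ∫ s in Ioc a b, F s w ∂μ = h w * ∫ s in Icc w b, f s ∂μ := by
    intro w hw
    have hIcc : Ici w ∩ Ioc a b = Icc w b := by
      ext s
      simp only [mem_inter_iff, mem_Ici, mem_Ioc, mem_Icc]
      exact ⟨fun ⟨h1, _, h3⟩ => ⟨h1, h3⟩, fun ⟨h1, h2⟩ => ⟨h1, hw.1.trans_le h1, h2⟩⟩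
    have : (fun s => F s w) = (Ici w).indicator (fun s => h w * f s) := by
      ext s
      by_cases hws : w ≤ s <;> simp [F, hws, mul_comm]
    rw [this, integral_indicator measurableSet_Ici, Measure.restrict_restrict measurableSet_Ici,
      hIcc, integral_const_mul]
  rw [setIntegral_congr_fun measurableSet_Ioc hs, integral_integral_swap hF,
    setIntegral_congr_fun measurableSet_Ioc hw]

/-- The reparametrization identity
`∫_0^1 ∫_0^1 s^k g(ss')/s' ds ds' = (1/(k+1)) (∫_0^1 g(w)/w dw - ∫_0^1 w^k g(w) dw)`. -/
theorem double_integral_reparametrization (k : ℕ) (g : ℝ → ℝ)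
    (hg : ContinuousOn g (Set.Icc 0 1))
    (hint : IntegrableOn (fun w => g w / w) (Set.Ioc (0:ℝ) 1)) :
    (∫ s in Set.Ioc (0:ℝ) 1, ∫ s' in Set.Ioc (0:ℝ) 1, s ^ k * (g (s * s') / s'))
      = (1 / ((k : ℝ) + 1)) *
          ((∫ w in Set.Ioc (0:ℝ) 1, g w / w)
            - ∫ w in Set.Ioc (0:ℝ) 1, w ^ k * g w) := by
  have hpow : IntegrableOn (fun s : ℝ => s ^ k) (Ioc 0 1) :=
    (continuous_pow k).integrableOn_Icc.mono_set Ioc_subset_Icc_self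
  have hpow_g : IntegrableOn (fun w => w ^ k * g w) (Ioc 0 1) :=
    (((continuous_pow k).continuousOn.mul hg).integrableOn_compact isCompact_Icc).mono_set
      Ioc_subset_Icc_self
  have inner : ∀ w ∈ Ioc (0:ℝ) 1, g w / w * ∫ s in Icc w 1, s ^ k
      = 1 / ((k : ℝ) + 1) * (g w / w - w ^ k * g w) := by
    intro w hw
    rw [integral_Icc_eq_integral_Ioc, ← intervalIntegral.integral_of_le hw.2, integral_pow,
      one_pow]
    field_simp [hw.1.ne']
    ring
  calc (∫ s in Ioc (0:ℝ) 1, ∫ s' in Ioc (0:ℝ) 1, s ^ k * (g (s * s') / s'))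
      = ∫ s in Ioc (0:ℝ) 1, s ^ k * ∫ w in Ioc 0 s, g w / w :=
        setIntegral_congr_fun measurableSet_Ioc fun s hs => by
          rw [integral_const_mul, setIntegral_Ioc_comp_mul_div g hs.1]
    _ = ∫ w in Ioc (0:ℝ) 1, g w / w * ∫ s in Icc w 1, s ^ k :=
        setIntegral_mul_setIntegral_Ioc_swap hpow hint
    _ = _ := by
        rw [setIntegral_congr_fun measurableSet_Ioc inner, integral_const_mul,
          integral_sub hint hpow_g]
end

section
/- Let p ≥ 1, let 0 ≤ i_0 < … < i_p ≤ n, and let i ∈ {0,…,n}. (1) For every t ∈ ℝ^{n+1} with Σ_j t_j = 1 and every v_1,…,v_{p−1} ∈ V: ω_{i_0,…,i_p}(t)(e_i − t, v_1,…,v_{p−1}) = (−1)^{l+1} ω_{i_0,…,î_l,…,i_p}(t)(v_1,…,v_{p−1}) if i = i_l for some l, and = 0 if i ∉ {i_0,…,i_p}. (2) Consequently h^i(ω_{i_0,…,i_p}) = ((−1)^{l+1}/p) · ω_{i_0,…,î_l,…,i_p} as forms on |Δ^n| if i = i_l for some l, and h^i(ω_{i_0,…,i_p}) = 0 on |Δ^n|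 if i ∉ {i_0,…,i_p}. -/
open MeasureTheory
open scoped BigOperators

noncomputable section

private lemma whitney_eq_det (n p : ℕ) (c : Fin (p + 1) → Fin (n + 1))
    (t : Vec n) (v : Fin p → Vec n) :
    whitney n p c t v =
      (Matrix.of (Fin.cons (fun b => t (c b)) (fun a b => v a (c b)) :
        Fin (p + 1) → Fin (p + 1) → ℝ)).det := by
  rw [Matrix.det_succ_row_zero]
  unfold whitney
  refine Finset.sum_congr rfl fun j _ => ?_
  congr 1

private lemma whitney_smul_fst (n p : ℕ) (c : Fin (p + 2) → Fin (n + 1))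
    (t : Vec n) (r : ℝ) (u : Vec n) (v : Fin p → Vec n) :
    whitney n (p + 1) c t (Fin.cons (r • u) v : Fin (p + 1) → Vec n)
      = r * whitney n (p + 1) c t (Fin.cons u v : Fin (p + 1) → Vec n) := by
  unfold whitney
  rw [Finset.mul_sum]
  refine Finset.sum_congr rfl fun l _ => ?_
  have h : (Matrix.of fun a b : Fin (p + 1) => (Fin.cons (r • u) v : Fin (p + 1) → Vec n) a (c (l.succAbove b)))
      = (Matrix.of fun a b : Fin (p + 1) => (Fin.cons u v : Fin (p + 1) → Vec n) a (c (l.succAbove b))).updateRow 0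
          (r • fun b => u (c (l.succAbove b))) := by
    ext a b
    refine Fin.cases ?_ (fun a => ?_) a
    · simp [Matrix.updateRow_apply]
    · simp [Matrix.updateRow_apply, Fin.succ_ne_zero]
  rw [h, Matrix.det_updateRow_smul]
  have h2 : (Matrix.of fun a b : Fin (p + 1) => (Fin.cons u v : Fin (p + 1) → Vec n) a (c (l.succAbove b))).updateRow 0
      (fun b => u (c (l.succAbove b)))
      = (Matrix.of fun a b : Fin (p + 1) => (Fin.cons u v : Fin (p + 1) → Vec n) a (c (l.succAbove b))) := by
    ext a b
    refine Fin.cases ?_ (fun a => ?_) a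
    · simp [Matrix.updateRow_apply]
    · simp [Matrix.updateRow_apply, Fin.succ_ne_zero]
  rw [h2]; ring

private lemma whitney_contract_eq (n q : ℕ) (c : Fin (q + 2) → Fin (n + 1))
    (hinj : Function.Injective c) (i : Fin (n + 1)) (t : Vec n) (v : Fin q → Vec n)
    (l : Fin (q + 2)) (hl : i = c l) :
    whitney n (q + 1) c t (Fin.cons (eVec n i - t) v : Fin (q + 1) → Vec n)
      = (-1 : ℝ) ^ ((l : ℕ) + 1) * whitney n q (fun b => c (Fin.succAbove l b)) t v := by
  rw [whitney_eq_det, whitney_eq_det]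
  set B : Matrix (Fin (q + 2)) (Fin (q + 2)) ℝ :=
    Matrix.of (Fin.cons (fun b => t (c b))
      (fun a b => (Fin.cons (eVec n i - t) v : Fin (q + 1) → Vec n) a (c b))) with hB
  have hrow : B.det = (B.updateRow 1 (B 1 + (1 : ℝ) • B 0)).det :=
    (Matrix.det_updateRow_add_smul_self B (i := (1 : Fin (q + 2))) (j := 0) one_ne_zero 1).symm
  have hrow1 : (B 1 + (1 : ℝ) • B 0) = fun b => eVec n i (c b) := by
    funext b
    have h1 : B 1 b = (eVec n i - t) (c b) := by
      show (Fin.cons (fun b => t (c b))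
        (fun a b => (Fin.cons (eVec n i - t) v : Fin (q + 1) → Vec n) a (c b)) :
          Fin (q + 2) → Fin (q + 2) → ℝ) 1 b = _
      rw [show (1 : Fin (q + 2)) = Fin.succ 0 from rfl, Fin.cons_succ, Fin.cons_zero]
    have h0 : B 0 b = t (c b) := rfl
    simp [h1, h0]
  rw [hrow, hrow1]
  set B' : Matrix (Fin (q + 2)) (Fin (q + 2)) ℝ :=
    B.updateRow 1 (fun b => eVec n i (c b)) with hB'
  rw [Matrix.det_succ_row B' 1]
  rw [Finset.sum_eq_single l]
  · have hv : B' 1 l = 1 := by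
      rw [hB', Matrix.updateRow_self]
      simp [eVec, ← hl, Pi.single_apply]
    have hsub : B'.submatrix (Fin.succAbove 1) l.succAbove
        = Matrix.of (Fin.cons (fun b => t (c (l.succAbove b)))
            (fun a b => v a (c (l.succAbove b))) : Fin (q + 1) → Fin (q + 1) → ℝ) := by
      ext a b
      refine Fin.cases ?_ (fun r => ?_) a
      · have h0 : (1 : Fin (q + 2)).succAbove 0 = 0 := by
          rw [Fin.succAbove_of_castSucc_lt] <;> simp
        simp only [Matrix.submatrix_apply, h0, hB', Matrix.updateRow_ne (zero_ne_one)]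
        rfl
      · have h1 : (1 : Fin (q + 2)).succAbove r.succ = r.succ.succ := by
          exact Fin.succAbove_of_le_castSucc _ _ (by simp [Fin.le_def])
        have h2 : r.succ.succ ≠ (1 : Fin (q + 2)) := by
          rw [show (1 : Fin (q + 2)) = Fin.succ 0 from rfl]
          exact fun h => Fin.succ_ne_zero r (Fin.succ_injective _ h)
        simp only [Matrix.submatrix_apply, h1, hB', Matrix.updateRow_ne h2]
        simp [hB, Fin.cons_succ]
    rw [hv, hsub]
    have hc1 : ((1 : Fin (q + 2)) : ℕ) = 1 := rfl
    rw [hc1]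
    ring_nf
  · intro j _ hj
    have hv : B' 1 j = 0 := by
      rw [hB', Matrix.updateRow_self]
      have : c j ≠ i := fun h => hj (hinj (h.trans hl))
      simp [eVec, Pi.single_apply, this]
    rw [hv]; ring
  · intro h; exact absurd (Finset.mem_univ l) h

private lemma whitney_contract_zero (n q : ℕ) (c : Fin (q + 2) → Fin (n + 1))
    (i : Fin (n + 1)) (hi : ∀ l, i ≠ c l) (t : Vec n) (v : Fin q → Vec n) :
    whitney n (q + 1) c t (Fin.cons (eVec n i - t) v : Fin (q + 1) → Vec n) = 0 := by
  rw [whitney_eq_det]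
  set B : Matrix (Fin (q + 2)) (Fin (q + 2)) ℝ :=
    Matrix.of (Fin.cons (fun b => t (c b))
      (fun a b => (Fin.cons (eVec n i - t) v : Fin (q + 1) → Vec n) a (c b))) with hB
  have hrow : B.det = (B.updateRow 1 (B 1 + (1 : ℝ) • B 0)).det :=
    (Matrix.det_updateRow_add_smul_self B (i := (1 : Fin (q + 2))) (j := 0) one_ne_zero 1).symm
  have hrow1 : (B 1 + (1 : ℝ) • B 0) = fun b => eVec n i (c b) := by
    funext b
    have h1 : B 1 b = (eVec n i - t) (c b) := by
      show (Fin.cons (fun b => t (c b))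
        (fun a b => (Fin.cons (eVec n i - t) v : Fin (q + 1) → Vec n) a (c b)) :
          Fin (q + 2) → Fin (q + 2) → ℝ) 1 b = _
      rw [show (1 : Fin (q + 2)) = Fin.succ 0 from rfl, Fin.cons_succ, Fin.cons_zero]
    have h0 : B 0 b = t (c b) := rfl
    simp [h1, h0]
  rw [hrow, hrow1]
  refine Matrix.det_eq_zero_of_row_eq_zero 1 fun b => ?_
  rw [Matrix.updateRow_self]
  have : c b ≠ i := fun h => hi b h.symm
  simp [eVec, Pi.single_apply, this]

private lemma whitney_shift (n q : ℕ) (c' : Fin (q + 1) → Fin (n + 1)) (i : Fin (n + 1))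
    (hi : ∀ b, c' b ≠ i) (s : ℝ) (t : Vec n) (v : Fin q → Vec n) :
    whitney n q c' ((1 - s) • t + s • eVec n i) v = (1 - s) * whitney n q c' t v := by
  unfold whitney
  rw [Finset.mul_sum]
  refine Finset.sum_congr rfl fun m _ => ?_
  have : ((1 - s) • t + s • eVec n i) (c' m) = (1 - s) * t (c' m) := by
    simp [eVec, Pi.single_apply, hi m]
  rw [this]; ring

private lemma ofDeg_eval (n p : ℕ) (ω : Vec n → (Fin p → Vec n) → ℝ) (t : Vec n)
    (w : Fin p → Vec n) :
    (if h : p = p then ω t (fun i => w (Fin.cast h.symm i)) else 0) = ω t w := by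
  simp

private lemma interval_aux (q : ℕ) (K : ℝ)
    (f : ℝ → ℝ) (hf : ∀ s : ℝ, s ≠ 1 → f s = K) :
    (∫ s in (0:ℝ)..1, (1 - s) ^ q * f s) = K / (q + 1) := by
  have hae : ∀ᵐ (s : ℝ) ∂MeasureTheory.volume, s ≠ 1 := by
    simpa using (Set.countable_singleton (1:ℝ)).ae_notMem MeasureTheory.volume
  have h1 : (∫ s in (0:ℝ)..1, (1 - s) ^ q * f s)
      = ∫ s in (0:ℝ)..1, (1 - s) ^ q * K := by
    refine intervalIntegral.integral_congr_ae ?_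
    filter_upwards [hae] with s hs _
    rw [hf s hs]
  have h2 : (∫ s in (0:ℝ)..1, (1 - s) ^ q) = 1 / (q + 1) := by
    have h3 := intervalIntegral.integral_comp_sub_left (a := (0:ℝ)) (b := 1)
      (fun x : ℝ => x ^ q) 1
    simp only [sub_zero, sub_self] at h3
    rw [h3, integral_pow]
    simp
  rw [h1, intervalIntegral.integral_mul_const, h2]
  ring

/-- Contraction of Whitney forms with `E_i = e_i - t` and the
value of `h^i` on Whitney forms. -/
theorem whitney_contraction_and_hOp (n q : ℕ)
    (c : Fin (q + 2) → Fin (n + 1)) (hc : StrictMono c) (i : Fin (n + 1)) :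
    -- (1) pointwise contraction identity
    (∀ t : Vec n, (∑ j, t j) = 1 → ∀ v : Fin q → Vec n, (∀ a, ∑ j, v a j = 0) →
      (∀ l : Fin (q + 2), i = c l →
        whitney n (q + 1) c t (Fin.cons (eVec n i - t) v)
          = (-1 : ℝ) ^ ((l : ℕ) + 1) *
              whitney n q (fun b => c (Fin.succAbove l b)) t v)
      ∧ ((∀ l, i ≠ c l) →
          whitney n (q + 1) c t (Fin.cons (eVec n i - t) v) = 0))
    ∧
    -- (2) consequence for h^i
    (∀ t ∈ stdSimplex ℝ (Fin (n + 1)), ∀ v : Fin q → Vec n, (∀ a, ∑ j, v a j = 0) →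
      (∀ l : Fin (q + 2), i = c l →
        hOp n i (ofDeg n (q + 1) (whitney n (q + 1) c)) q t v
          = ((-1 : ℝ) ^ ((l : ℕ) + 1) / (q + 1)) *
              whitney n q (fun b => c (Fin.succAbove l b)) t v)
      ∧ ((∀ l, i ≠ c l) →
          hOp n i (ofDeg n (q + 1) (whitney n (q + 1) c)) q t v = 0)) := by
  have hsmall : ∀ (l : Fin (q + 2)), i = c l → ∀ b, c (Fin.succAbove l b) ≠ i := by
    intro l hl b h
    exact Fin.succAbove_ne l b (hc.injective (h.trans hl))
  constructor
  · intro t _ v _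
    refine ⟨fun l hl => whitney_contract_eq n q c hc.injective i t v l hl,
      fun hi => whitney_contract_zero n q c i hi t v⟩
  · intro t _ v _
    have hunf : hOp n i (ofDeg n (q + 1) (whitney n (q + 1) c)) q t v
        = ∫ s in (0:ℝ)..1, (1 - s) ^ q *
            whitney n (q + 1) c ((1 - s) • t + s • eVec n i)
              (Fin.cons (eVec n i - t) v : Fin (q + 1) → Vec n) := by
      simp only [hOp]
      refine intervalIntegral.integral_congr fun s _ => ?_
      rw [show ofDeg n (q + 1) (whitney n (q + 1) c) (q + 1)
          ((1 - s) • t + s • eVec n i) (Fin.cons (eVec n i - t) v)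
        = whitney n (q + 1) c ((1 - s) • t + s • eVec n i)
            (Fin.cons (eVec n i - t) v : Fin (q + 1) → Vec n) from by
          rw [ofDeg]; exact ofDeg_eval n (q + 1) (whitney n (q + 1) c) _ _]
    constructor
    · intro l hl
      have key : ∀ s : ℝ, s ≠ 1 →
          whitney n (q + 1) c ((1 - s) • t + s • eVec n i)
            (Fin.cons (eVec n i - t) v : Fin (q + 1) → Vec n)
          = (-1 : ℝ) ^ ((l : ℕ) + 1) *
              whitney n q (fun b => c (Fin.succAbove l b)) t v := by
        intro s hs
        set t' : Vec n := (1 - s) • t + s • eVec n i with ht'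
        have hvec : (1 - s) • (eVec n i - t) = eVec n i - t' := by
          funext j
          simp only [ht', Pi.smul_apply, Pi.sub_apply, Pi.add_apply, smul_eq_mul]
          ring
        have h1 := whitney_smul_fst n q c t' (1 - s) (eVec n i - t) v
        rw [hvec] at h1
        have h2 := whitney_contract_eq n q c hc.injective i t' v l hl
        have h3 := whitney_shift n q (fun b => c (Fin.succAbove l b)) i
          (fun b h => hsmall l hl b h) s t v
        have h4 : (1 - s) *
            whitney n (q + 1) c t' (Fin.cons (eVec n i - t) v : Fin (q + 1) → Vec n)
            = (1 - s) * ((-1 : ℝ) ^ ((l : ℕ) + 1) *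
                whitney n q (fun b => c (Fin.succAbove l b)) t v) := by
          rw [← h1, h2, h3]; ring
        exact mul_left_cancel₀ (sub_ne_zero_of_ne (Ne.symm hs)) h4
      rw [hunf, interval_aux q _ _ key]
      ring
    · intro hi
      have key : ∀ s : ℝ, s ≠ 1 →
          whitney n (q + 1) c ((1 - s) • t + s • eVec n i)
            (Fin.cons (eVec n i - t) v : Fin (q + 1) → Vec n) = 0 := by
        intro s hs
        set t' : Vec n := (1 - s) • t + s • eVec n i with ht'
        have hvec : (1 - s) • (eVec n i - t) = eVec n i - t' := by
          funext j
          simp only [ht', Pi.smul_apply, Pi.sub_apply, Pi.add_apply, smul_eq_mul]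
          ring
        have h1 := whitney_smul_fst n q c t' (1 - s) (eVec n i - t) v
        rw [hvec] at h1
        have h2 := whitney_contract_zero n q c i hi t' v
        have h4 : (1 - s) *
            whitney n (q + 1) c t' (Fin.cons (eVec n i - t) v : Fin (q + 1) → Vec n)
            = (1 - s) * 0 := by
          rw [← h1, h2]; ring
        exact mul_left_cancel₀ (sub_ne_zero_of_ne (Ne.symm hs)) h4
      rw [hunf, interval_aux q _ _ key]
      simp


end
end

section
/- Let p ≥ 1 and let G_p : [0,1]^p → ℝ^{p+1} be G_p(s_0,…,s_{p−1}) = (1−s_0)e_0 + s_0(1−s_1)e_1 + ⋯ + s_0⋯s_{p−2}(1−s_{p−1})e_{p−1} + s_0⋯s_{p−1}e_p. Then: (1) at every point of the open cube (0,1)^p the differential of G_p is injective (has rank p); (2) G_p restricted to (0,1)^p is injective; (3) at every point of (0,1)^p, the determinant of the (p+1)×(p+1) matrix whose first column is the all-ones vector and whose remaining p columns are ∂G_p/∂s_0, …, ∂G_p/∂s_{p−1} is strictly positive. -/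
open MeasureTheory
open scoped BigOperators

noncomputable section

/-- The canonical parametrization `G_p : [0,1]^p → ℝ^{p+1}` of the standard
`p`-simplex. -/
def Gstd (p : ℕ) : (Fin p → ℝ) → Vec p := GmapV p p (fun l => eVec p l)

/-- The `(p+1) × (p+1)` matrix whose first column is the all-ones vector and whose
remaining columns are the partial derivatives `∂G_p/∂s_a`. -/
def GstdMat (p : ℕ) (s : Fin p → ℝ) : Matrix (Fin (p + 1)) (Fin (p + 1)) ℝ :=
  Matrix.of fun r c =>
    Fin.cases (motive := fun _ => ℝ) 1
      (fun a => fderiv ℝ (Gstd p) s (Pi.single a 1) r) c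

/-! Write `P_k = s_0 ⋯ s_{k-1}`. The coordinates of `G_p(s)` are `P_r (1 - s_r)` for `r < p` and
`P_p`, so its suffix sums telescope: `∑_{r ≥ k} G_p(s)_r = P_k`. Hence `G_p(s)` determines every
`P_k`, and `s_a = P_{a+1} / P_a` wherever no coordinate vanishes. Multiplying the matrix on the left
by the upper-triangular matrix of ones (determinant `1`) replaces its rows by these suffix sums: the
first column becomes `(p + 1, p, …, 1)` and the others the gradients of the `P_k`, so the product is
lower triangular with diagonal `p + 1, P_0, …, P_{p-1}`. The determinant is therefore
`(p + 1) P_0 ⋯ P_{p-1}`, and its nonvanishing also makes the differential injective. -/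

open Finset

section Calculus

variable {𝕜 ι E F : Type*} [NontriviallyNormedField 𝕜]
  [NormedAddCommGroup E] [NormedSpace 𝕜 E] [NormedAddCommGroup F] [NormedSpace 𝕜 F]

theorem fderiv_finsetProd_apply_single [Fintype ι] [DecidableEq ι] (S : Finset ι) (x : ι → 𝕜)
    (a : ι) :
    fderiv 𝕜 (fun y : ι → 𝕜 => ∏ b ∈ S, y b) x (Pi.single a 1) =
      if a ∈ S then ∏ b ∈ S.erase a, x b else 0 := by
  rw [hasFDerivAt_finsetProd.fderiv]
  simp [Pi.single_apply, Finset.sum_ite_eq']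

theorem fderiv_finsetSum_apply [Fintype ι] {f : E → ι → F} {x : E} (hf : DifferentiableAt 𝕜 f x)
    (T : Finset ι) (v : E) :
    fderiv 𝕜 (fun y => ∑ i ∈ T, f y i) x v = ∑ i ∈ T, fderiv 𝕜 f x v i := by
  rw [(HasFDerivAt.fun_sum fun i _ => hasFDerivAt_pi'.1 hf.hasFDerivAt i).fderiv]
  simp

end Calculus

namespace Matrix

variable {m R : Type*} [Fintype m] [LinearOrder m]

def upperOnes (m R : Type*) [LinearOrder m] [Zero R] [One R] : Matrix m m R :=
  of fun k r => if k ≤ r then 1 else 0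

theorem upperOnes_mul_apply [Semiring R] (A : Matrix m m R) (k c : m) :
    (upperOnes m R * A) k c = ∑ r with k ≤ r, A r c := by
  simp [upperOnes, mul_apply, Finset.sum_filter]

theorem det_upperOnes [CommRing R] : (upperOnes m R).det = 1 := by
  rw [det_of_isUpperTriangular]
  · simp [upperOnes]
  · intro k r (h : r < k)
    simp [upperOnes, not_le.mpr h]

end Matrix

section PrefixProd

variable {M : Type*} {p : ℕ}

def prefixProd [CommMonoid M] (s : Fin p → M) (k : Fin (p + 1)) : M :=
  ∏ b ∈ univ.filter (fun b : Fin p => (b : ℕ) < (k : ℕ)), s b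

theorem prefixProd_succ [CommMonoid M] (s : Fin p → M) (a : Fin p) :
    prefixProd s a.succ = prefixProd s a.castSucc * s a := by
  have : univ.filter (fun b : Fin p => (b : ℕ) < (a.succ : ℕ)) =
      insert a (univ.filter fun b : Fin p => (b : ℕ) < (a.castSucc : ℕ)) := by
    ext b
    simp only [mem_filter, mem_univ, true_and, mem_insert, Fin.val_succ, Fin.val_castSucc,
      Fin.ext_iff]
    omega
  rw [prefixProd, this, prod_insert (by simp), mul_comm]
  rfl

end PrefixProd

section Gstd

open Matrix

variable {p : ℕ}

theorem Gstd_apply (s : Fin p → ℝ) (r : Fin (p + 1)) :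
    Gstd p s r = prefixProd s r * (if h : (r : ℕ) < p then 1 - s ⟨r, h⟩ else 1) := by
  simp only [Gstd, GmapV, eVec, Finset.sum_apply, Pi.smul_apply, Pi.single_apply, smul_eq_mul,
    mul_ite, mul_one, mul_zero, sum_ite_eq, mem_univ, if_true, prefixProd]

theorem Gstd_apply_castSucc (s : Fin p → ℝ) (a : Fin p) :
    Gstd p s a.castSucc = prefixProd s a.castSucc * (1 - s a) := by
  simp [Gstd_apply]

theorem Gstd_apply_last (s : Fin p → ℝ) : Gstd p s (Fin.last p) = prefixProd s (Fin.last p) := by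
  simp [Gstd_apply]

theorem sum_filter_le_Gstd (s : Fin p → ℝ) (k : Fin (p + 1)) :
    ∑ r with k ≤ r, Gstd p s r = prefixProd s k := by
  rw [filter_le_eq_Ici]
  induction k using Fin.reverseInduction with
  | last => rw [← Fin.top_eq_last, Ici_top, sum_singleton, Fin.top_eq_last, Gstd_apply_last]
  | cast a ih =>
    have : Ioi a.castSucc = Ici a.succ := by
      ext r
      simp [Fin.castSucc_lt_iff_succ_le]
    rw [Ici_eq_cons_Ioi, sum_cons, this, ih, Gstd_apply_castSucc, prefixProd_succ]
    ring

theorem differentiable_Gstd : Differentiable ℝ (Gstd p) := by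
  unfold Gstd GmapV
  refine Differentiable.fun_sum fun l _ => Differentiable.smul_const ?_ _
  by_cases h : (l : ℕ) < p
  · simp only [h, dite_true]
    fun_prop
  · simp only [h, dite_false]
    fun_prop

theorem upperOnes_mul_GstdMat_succ (s : Fin p → ℝ) (k : Fin (p + 1)) (a : Fin p) :
    (upperOnes (Fin (p + 1)) ℝ * GstdMat p s) k a.succ =
      if (a : ℕ) < k then ∏ b ∈ (univ.filter fun b : Fin p => (b : ℕ) < k).erase a, s b
      else 0 := by
  have hsum : (fun t => ∑ r with k ≤ r, Gstd p t r) = fun t => prefixProd t k :=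
    funext fun t => sum_filter_le_Gstd t k
  rw [upperOnes_mul_apply]
  simp only [GstdMat, of_apply, Fin.cases_succ]
  rw [← fderiv_finsetSum_apply (differentiable_Gstd s), hsum]
  simp only [prefixProd, fderiv_finsetProd_apply_single, mem_filter, mem_univ, true_and]

theorem det_GstdMat (s : Fin p → ℝ) :
    (GstdMat p s).det = (p + 1) * ∏ a : Fin p, prefixProd s a.castSucc := by
  have htri : (upperOnes (Fin (p + 1)) ℝ * GstdMat p s).IsLowerTriangular := by
    intro k c (h : k < c)
    induction c using Fin.cases with
    | zero => exact absurd h (Fin.not_lt_zero k)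
    | succ a =>
      rw [upperOnes_mul_GstdMat_succ, if_neg]
      have := Fin.lt_def.mp h
      simp only [Fin.val_succ] at this
      omega
  have hdet : (GstdMat p s).det = (upperOnes (Fin (p + 1)) ℝ * GstdMat p s).det := by
    rw [det_mul, det_upperOnes, one_mul]
  rw [hdet, det_of_isLowerTriangular _ htri, Fin.prod_univ_succ]
  congr 1
  · simp [upperOnes_mul_apply, GstdMat]
  · refine prod_congr rfl fun a _ => ?_
    rw [upperOnes_mul_GstdMat_succ, if_pos (by simp), prefixProd]
    congr 1
    ext b
    simp only [mem_erase, mem_filter, mem_univ, true_and, Fin.val_succ, Fin.val_castSucc,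
      ne_eq, Fin.ext_iff]
    omega

theorem fderiv_Gstd_eq_mulVec (s v : Fin p → ℝ) :
    fderiv ℝ (Gstd p) s v = GstdMat p s *ᵥ Fin.cons 0 v := by
  have hv : ∀ a, Pi.single a (v a) = v a • (Pi.single a 1 : Fin p → ℝ) := fun a => by
    rw [← Pi.single_smul', smul_eq_mul, mul_one]
  conv_lhs => rw [← LinearMap.sum_single_apply (φ := fun _ => ℝ) v]
  ext r
  simp [mulVec, dotProduct, Fin.sum_univ_succ, GstdMat, hv, mul_comm]

theorem det_GstdMat_ne_zero {s : Fin p → ℝ} (hs : ∀ a, s a ≠ 0) : (GstdMat p s).det ≠ 0 := by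
  rw [det_GstdMat]
  exact mul_ne_zero (by positivity)
    (prod_ne_zero_iff.2 fun a _ => prod_ne_zero_iff.2 fun b _ => hs b)

theorem det_GstdMat_pos {s : Fin p → ℝ} (hs : ∀ a, 0 < s a) : 0 < (GstdMat p s).det := by
  rw [det_GstdMat]
  exact mul_pos (by positivity) (prod_pos fun a _ => prod_pos fun b _ => hs b)

theorem injective_fderiv_Gstd {s : Fin p → ℝ} (hs : ∀ a, s a ≠ 0) :
    Function.Injective (fderiv ℝ (Gstd p) s) := by
  refine (injective_iff_map_eq_zero _).2 fun v hv => ?_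
  rw [fderiv_Gstd_eq_mulVec] at hv
  have hcons := eq_zero_of_mulVec_eq_zero (det_GstdMat_ne_zero hs) hv
  funext a
  simpa using congrFun hcons a.succ

theorem Gstd_injOn : Set.InjOn (Gstd p) {s | ∀ a, s a ≠ 0} := by
  intro s _ t ht hst
  have hprod : ∀ k, prefixProd s k = prefixProd t k := fun k => by
    rw [← sum_filter_le_Gstd, ← sum_filter_le_Gstd, hst]
  funext a
  have hsucc := prefixProd_succ s a
  rw [hprod, hprod, prefixProd_succ] at hsucc
  exact (mul_left_cancel₀ (prod_ne_zero_iff.2 fun b _ => ht b) hsucc).symm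

end Gstd

theorem Gstd_orientation_general (p : ℕ) :
    (∀ s : Fin p → ℝ, (∀ a, s a ∈ Set.Ioo (0:ℝ) 1) →
      Function.Injective (fderiv ℝ (Gstd p) s))
    ∧ Set.InjOn (Gstd p) {s | ∀ a, s a ∈ Set.Ioo (0:ℝ) 1}
    ∧ (∀ s : Fin p → ℝ, (∀ a, s a ∈ Set.Ioo (0:ℝ) 1) →
        0 < Matrix.det (GstdMat p s)) := by
  have hne : ∀ s : Fin p → ℝ, (∀ a, s a ∈ Set.Ioo (0:ℝ) 1) → ∀ a, s a ≠ 0 :=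
    fun s hs a => (hs a).1.ne'
  exact ⟨fun s hs => injective_fderiv_Gstd (hne s hs), Gstd_injOn.mono hne,
    fun s hs => det_GstdMat_pos fun a => (hs a).1⟩

/-- On the open cube the differential of `G_p` is injective,
`G_p` is injective, and the determinant of the matrix whose columns are the
all-ones vector followed by the partial derivatives of `G_p` is positive. -/
theorem Gstd_orientation (p : ℕ) (hp : 1 ≤ p) :
    (∀ s : Fin p → ℝ, (∀ a, s a ∈ Set.Ioo (0:ℝ) 1) →
      Function.Injective (fderiv ℝ (Gstd p) s))
    ∧ Set.InjOn (Gstd p) {s | ∀ a, s a ∈ Set.Ioo (0:ℝ) 1}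
    ∧ (∀ s : Fin p → ℝ, (∀ a, s a ∈ Set.Ioo (0:ℝ) 1) →
        0 < Matrix.det (GstdMat p s)) :=
  Gstd_orientation_general p

end
end
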